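/- arXiv:2508.02350 — 10 statements merged into one kernel-verified Lean document; each statement's English description precedes it below -/
import Mathlib

section
/- Under the coupled adaptive error dynamics, the Lyapunov function V(t) = ½‖x̃(t)‖² + (1/(2Γ))‖ψ̃(t)‖_F² is differentiable at every t ≥ t₀ with derivative V'(t) = −k‖x̃(t)‖². -/
open Filter Topology

attribute [local instance] Matrix.frobeniusNormedAddCommGroup Matrix.frobeniusNormedSpace

noncomputable def matEntryCLM (n p : ℕ) (a : Fin n) (b : Fin p) :
    Matrix (Fin n) (Fin p) ℝ →L[ℝ] ℝ :=
  LinearMap.toContinuousLinearMap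
    { toFun := fun M => M a b, map_add' := fun _ _ => rfl, map_smul' := fun _ _ => rfl }

lemma matEntryCLM_apply (n p : ℕ) (a : Fin n) (b : Fin p) (M : Matrix (Fin n) (Fin p) ℝ) :
    matEntryCLM n p a b M = M a b := rfl

lemma euclid_norm_sq (n : ℕ) (x : EuclideanSpace ℝ (Fin n)) :
    ‖x‖ ^ 2 = ∑ i, (x i) ^ 2 := by
  rw [EuclideanSpace.norm_eq, Real.sq_sqrt (by positivity)]
  simp [sq_abs]

lemma frob_norm_sq (n p : ℕ) (M : Matrix (Fin n) (Fin p) ℝ) :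
    ‖M‖ ^ 2 = ∑ a, ∑ b, (M a b) ^ 2 := by
  rw [Matrix.frobenius_norm_def, ← Real.sqrt_eq_rpow,
    Real.sq_sqrt (by positivity)]
  norm_num [Real.rpow_two, sq_abs]

/-- Under the coupled adaptive error dynamics, the Lyapunov function
`V(t) = ½‖x̃(t)‖² + (1/(2Γ))‖ψ̃(t)‖_F²` is differentiable at every `t ≥ t₀` with
derivative `V'(t) = −k‖x̃(t)‖²`. -/
theorem lyapunov_derivative
    (n p : ℕ) (t₀ k Γ : ℝ) (hk : 0 < k) (hΓ : 0 < Γ)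
    (xtil : ℝ → EuclideanSpace ℝ (Fin n))
    (psitil : ℝ → Matrix (Fin n) (Fin p) ℝ)
    (X : ℝ → EuclideanSpace ℝ (Fin p))
    (hx : ∀ t, t₀ ≤ t →
      HasDerivAt xtil ((show EuclideanSpace ℝ (Fin n) from WithLp.toLp 2 ((psitil t).mulVec (X t))) - k • xtil t) t)
    (hψ : ∀ t, t₀ ≤ t →
      HasDerivAt psitil (-Γ • Matrix.vecMulVec (xtil t) (X t)) t)
    (V : ℝ → ℝ)
    (hV : ∀ t, V t = (1/2) * ‖xtil t‖ ^ 2 + (1/(2*Γ)) * ‖psitil t‖ ^ 2) :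
    ∀ t, t₀ ≤ t → HasDerivAt V (-k * ‖xtil t‖ ^ 2) t := by
  intro t ht
  have hVfun : V = fun s => (1/2) * ∑ i, (xtil s i) ^ 2 +
      (1/(2*Γ)) * ∑ a, ∑ b, (psitil s a b) ^ 2 := by
    funext s
    rw [hV s, euclid_norm_sq, frob_norm_sq]
  -- component derivatives
  have hxi : ∀ i, HasDerivAt (fun s => xtil s i)
      ((psitil t).mulVec (X t) i - k * xtil t i) t := by
    intro i
    have := (EuclideanSpace.proj i (𝕜 := ℝ)).hasFDerivAt.comp_hasDerivAt t (hx t ht)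
    simpa [Function.comp_def] using this
  have hMab : ∀ a b, HasDerivAt (fun s => psitil s a b)
      (-Γ * (xtil t a * X t b)) t := by
    intro a b
    have := (matEntryCLM n p a b).hasFDerivAt.comp_hasDerivAt t (hψ t ht)
    refine this.congr_deriv ?_
    show (-Γ • Matrix.vecMulVec (xtil t) (X t)) a b = _
    simp [Matrix.vecMulVec_apply, mul_assoc]
  have h1 : HasDerivAt (fun s => ∑ i, (xtil s i) ^ 2)
      (∑ i, 2 * xtil t i * ((psitil t).mulVec (X t) i - k * xtil t i)) t := by
    refine HasDerivAt.fun_sum fun i _ => ?_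
    simpa [mul_comm, mul_assoc, pow_one] using (hxi i).fun_pow 2
  have h2 : HasDerivAt (fun s => ∑ a, ∑ b, (psitil s a b) ^ 2)
      (∑ a, ∑ b, 2 * psitil t a b * (-Γ * (xtil t a * X t b))) t := by
    refine HasDerivAt.fun_sum fun a _ => HasDerivAt.fun_sum fun b _ => ?_
    simpa [mul_comm, mul_assoc, pow_one] using (hMab a b).fun_pow 2
  have hD := (h1.const_mul (1/2)).add (h2.const_mul (1/(2*Γ)))
  rw [hVfun]
  refine hD.congr_deriv ?_
  rw [euclid_norm_sq]
  have hmv : ∀ a, (psitil t).mulVec (X t) a = ∑ b, psitil t a b * X t b := by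
    intro a; simp [Matrix.mulVec, dotProduct]
  simp only [hmv, mul_sub, Finset.sum_sub_distrib, Finset.mul_sum]
  have hΓ' : Γ ≠ 0 := ne_of_gt hΓ
  have hAC : (∑ a : Fin n, ∑ b : Fin p, 1/2 * (2 * xtil t a * (psitil t a b * X t b)))
      + ∑ a : Fin n, ∑ b : Fin p, 1/(2*Γ) * (2 * psitil t a b * (-Γ * (xtil t a * X t b))) = 0 := by
    rw [← Finset.sum_add_distrib]
    refine Finset.sum_eq_zero fun a _ => ?_
    rw [← Finset.sum_add_distrib]
    refine Finset.sum_eq_zero fun b _ => ?_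
    field_simp
    ring
  have hL : ∑ i : Fin n, -k * xtil t i ^ 2
      = -(∑ i : Fin n, 1/2 * (2 * xtil t i * (k * xtil t i))) := by
    rw [← Finset.sum_neg_distrib]
    exact Finset.sum_congr rfl fun i _ => by ring
  linarith [hAC, hL]
end

section
/- Under the coupled adaptive error dynamics, for every t ≥ t₀ one has ‖x̃(t)‖² + (1/Γ)‖ψ̃(t)‖_F² ≤ ‖x̃(t₀)‖² + (1/Γ)‖ψ̃(t₀)‖_F²; in particular both x̃ and ψ̃ are bounded on [t₀, ∞). (Claim 1 of Theorem 1.) -/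
open Filter Topology

attribute [local instance] Matrix.frobeniusNormedAddCommGroup Matrix.frobeniusNormedSpace

noncomputable def matIso (n p : ℕ) :
    Matrix (Fin n) (Fin p) ℝ →ₗᵢ[ℝ] EuclideanSpace ℝ (Fin n × Fin p) :=
{ toFun := fun M => WithLp.toLp 2 (fun ab : Fin n × Fin p => M ab.1 ab.2)
  map_add' := by intros; rfl
  map_smul' := by intros; rfl
  norm_map' := by
    intro M
    rw [EuclideanSpace.norm_eq, Matrix.frobenius_norm_def, Real.sqrt_eq_rpow]
    congr 1
    rw [Fintype.sum_prod_type]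
    norm_num [Real.rpow_natCast]
    rfl }

/-- (Claim 1 of Theorem 1.) Under the coupled adaptive error dynamics,
for every `t ≥ t₀` one has
`‖x̃(t)‖² + (1/Γ)‖ψ̃(t)‖_F² ≤ ‖x̃(t₀)‖² + (1/Γ)‖ψ̃(t₀)‖_F²`;
in particular both `x̃` and `ψ̃` are bounded on `[t₀, ∞)`. -/
theorem adaptive_errors_bounded
    (n p : ℕ) (t₀ k Γ : ℝ) (hk : 0 < k) (hΓ : 0 < Γ)
    (xtil : ℝ → EuclideanSpace ℝ (Fin n))
    (psitil : ℝ → Matrix (Fin n) (Fin p) ℝ)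
    (X : ℝ → EuclideanSpace ℝ (Fin p))
    (hx : ∀ t, t₀ ≤ t →
      HasDerivAt xtil ((show EuclideanSpace ℝ (Fin n) from WithLp.toLp 2 ((psitil t).mulVec (X t))) - k • xtil t) t)
    (hψ : ∀ t, t₀ ≤ t →
      HasDerivAt psitil (-Γ • Matrix.vecMulVec (xtil t) (X t)) t) :
    (∀ t, t₀ ≤ t →
      ‖xtil t‖ ^ 2 + (1/Γ) * ‖psitil t‖ ^ 2 ≤ ‖xtil t₀‖ ^ 2 + (1/Γ) * ‖psitil t₀‖ ^ 2) ∧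
    (∃ B : ℝ, ∀ t, t₀ ≤ t → ‖xtil t‖ ≤ B ∧ ‖psitil t‖ ≤ B) := by
  set F := matIso n p with hF
  set P : ℝ → EuclideanSpace ℝ (Fin n × Fin p) := fun t => F (psitil t) with hP
  set g : ℝ → ℝ := fun t => ‖xtil t‖ ^ 2 + (1/Γ) * ‖P t‖ ^ 2 with hg
  have hPnorm : ∀ t, ‖P t‖ = ‖psitil t‖ := fun t => F.norm_map _
  -- derivative of P
  have hPderiv : ∀ t, t₀ ≤ t → HasDerivAt P (F (-Γ • Matrix.vecMulVec (xtil t) (X t))) t := by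
    intro t ht
    exact (F.toContinuousLinearMap.hasFDerivAt.comp_hasDerivAt t (hψ t ht))
  -- derivative of g
  have hFapp : ∀ (M : Matrix (Fin n) (Fin p) ℝ) (ab : Fin n × Fin p),
      F M ab = M ab.1 ab.2 := fun _ _ => rfl
  have hgderiv : ∀ t, t₀ ≤ t → HasDerivAt g (-(2*k) * ‖xtil t‖ ^ 2) t := by
    intro t ht
    have h1 := (hx t ht).inner ℝ (hx t ht)
    have h2 := (hPderiv t ht).inner ℝ (hPderiv t ht)
    have hgeq : g = fun s => @inner ℝ _ _ (xtil s) (xtil s) + (1/Γ) * @inner ℝ _ _ (P s) (P s) := by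
      funext s
      simp only [hg, real_inner_self_eq_norm_sq]
    rw [hgeq]
    have hcomb := h1.add (h2.const_mul (1/Γ))
    convert hcomb using 1
    · rfl
    · rfl
    · rfl
    have key : @inner ℝ _ _ (F (Matrix.vecMulVec (xtil t) (X t))) (P t)
        = @inner ℝ _ _ ((show EuclideanSpace ℝ (Fin n) from WithLp.toLp 2 ((psitil t).mulVec (X t)))) (xtil t) := by
      simp only [PiLp.inner_apply, RCLike.inner_apply, conj_trivial, hP, hFapp,
        Matrix.vecMulVec_apply, Matrix.mulVec, dotProduct, Fintype.sum_prod_type,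
        Finset.sum_mul, Finset.mul_sum]
      exact Finset.sum_congr rfl fun a _ => Finset.sum_congr rfl fun b _ => by ring
    have hFsmul : F (-Γ • Matrix.vecMulVec (xtil t) (X t)) = (-Γ) • F (Matrix.vecMulVec (xtil t) (X t)) :=
      F.map_smul _ _
    have hsym1 : @inner ℝ _ _ (xtil t) ((show EuclideanSpace ℝ (Fin n) from WithLp.toLp 2 ((psitil t).mulVec (X t))))
        = @inner ℝ _ _ ((show EuclideanSpace ℝ (Fin n) from WithLp.toLp 2 ((psitil t).mulVec (X t)))) (xtil t) :=
      real_inner_comm _ _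
    have hsym2 : @inner ℝ _ _ (P t) (F (Matrix.vecMulVec (xtil t) (X t)))
        = @inner ℝ _ _ (F (Matrix.vecMulVec (xtil t) (X t))) (P t) := real_inner_comm _ _
    simp only [hFsmul, inner_sub_left, inner_sub_right, real_inner_smul_left, real_inner_smul_right]
    rw [hsym1, hsym2, key, real_inner_self_eq_norm_sq]
    field_simp
    ring
  -- continuity of g on Ici t₀
  have hgcont : ContinuousOn g (Set.Ici t₀) := by
    intro t ht
    exact ((hgderiv t ht).continuousAt).continuousWithinAt
  -- antitone
  have hanti : AntitoneOn g (Set.Ici t₀) := by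
    apply antitoneOn_of_deriv_nonpos (convex_Ici t₀) hgcont
    · intro t ht
      rw [interior_Ici] at ht
      exact ((hgderiv t (le_of_lt ht)).differentiableAt).differentiableWithinAt
    · intro t ht
      rw [interior_Ici] at ht
      rw [(hgderiv t (le_of_lt ht)).deriv]
      have : (0:ℝ) ≤ ‖xtil t‖ ^ 2 := sq_nonneg _
      nlinarith
  have hmain : ∀ t, t₀ ≤ t →
      ‖xtil t‖ ^ 2 + (1/Γ) * ‖psitil t‖ ^ 2 ≤ ‖xtil t₀‖ ^ 2 + (1/Γ) * ‖psitil t₀‖ ^ 2 := by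
    intro t ht
    have := hanti (Set.self_mem_Ici) ht ht
    simpa [hg, hPnorm] using this
  refine ⟨hmain, ?_⟩
  set V₀ := ‖xtil t₀‖ ^ 2 + (1/Γ) * ‖psitil t₀‖ ^ 2 with hV₀
  have hV₀nn : 0 ≤ V₀ := by positivity
  refine ⟨Real.sqrt V₀ + Real.sqrt (Γ * V₀), ?_⟩
  intro t ht
  have h := hmain t ht
  have hψnn : 0 ≤ (1/Γ) * ‖psitil t‖ ^ 2 := by positivity
  have hxnn : 0 ≤ ‖xtil t‖ ^ 2 := sq_nonneg _
  constructor
  · have hx2 : ‖xtil t‖ ^ 2 ≤ V₀ := le_trans (le_add_of_nonneg_right hψnn) h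
    have : ‖xtil t‖ ≤ Real.sqrt V₀ := by
      rw [← Real.sqrt_sq (norm_nonneg (xtil t))]
      exact Real.sqrt_le_sqrt hx2
    have h2 : 0 ≤ Real.sqrt (Γ * V₀) := Real.sqrt_nonneg _
    linarith
  · have hp2 : ‖psitil t‖ ^ 2 ≤ Γ * V₀ := by
      have : (1/Γ) * ‖psitil t‖ ^ 2 ≤ V₀ := le_trans (le_add_of_nonneg_left hxnn) h
      calc ‖psitil t‖ ^ 2 = Γ * ((1/Γ) * ‖psitil t‖ ^ 2) := by field_simp
        _ ≤ Γ * V₀ := by nlinarith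
    have : ‖psitil t‖ ≤ Real.sqrt (Γ * V₀) := by
      rw [← Real.sqrt_sq (norm_nonneg (psitil t))]
      exact Real.sqrt_le_sqrt hp2
    have h1 : 0 ≤ Real.sqrt V₀ := Real.sqrt_nonneg _
    linarith
end

section
/- Under the coupled adaptive error dynamics, the function t ↦ ‖x̃(t)‖² is integrable on [t₀, ∞) and satisfies ∫_{t₀}^{T} ‖x̃(s)‖² ds ≤ V(t₀)/k for every T ≥ t₀, where V(t₀) = ½‖x̃(t₀)‖² + (1/(2Γ))‖ψ̃(t₀)‖_F². -/
open Filter Topology MeasureTheory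

attribute [local instance] Matrix.frobeniusNormedAddCommGroup Matrix.frobeniusNormedSpace

/-- Under the coupled adaptive error dynamics, the function
`t ↦ ‖x̃(t)‖²` is integrable on `[t₀, ∞)` and satisfies
`∫_{t₀}^{T} ‖x̃(s)‖² ds ≤ V(t₀)/k` for every `T ≥ t₀`, where
`V(t₀) = ½‖x̃(t₀)‖² + (1/(2Γ))‖ψ̃(t₀)‖_F²`. -/
theorem xtil_sq_integrable
    (n p : ℕ) (t₀ k Γ : ℝ) (hk : 0 < k) (hΓ : 0 < Γ)
    (xtil : ℝ → EuclideanSpace ℝ (Fin n))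
    (psitil : ℝ → Matrix (Fin n) (Fin p) ℝ)
    (X : ℝ → EuclideanSpace ℝ (Fin p))
    (hx : ∀ t, t₀ ≤ t →
      HasDerivAt xtil ((show EuclideanSpace ℝ (Fin n) from WithLp.toLp 2 ((psitil t).mulVec (X t))) - k • xtil t) t)
    (hψ : ∀ t, t₀ ≤ t →
      HasDerivAt psitil (-Γ • Matrix.vecMulVec (xtil t) (X t)) t) :
    IntegrableOn (fun s => ‖xtil s‖ ^ 2) (Set.Ici t₀) volume ∧
    ∀ T, t₀ ≤ T →
      (∫ s in t₀..T, ‖xtil s‖ ^ 2) ≤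
        ((1/2) * ‖xtil t₀‖ ^ 2 + (1/(2*Γ)) * ‖psitil t₀‖ ^ 2) / k := by
  classical
  set F : ℝ → ℝ := fun t => ∑ i, xtil t i ^ 2 with hFdef
  set V : ℝ → ℝ := fun t =>
    (1/2) * ∑ i, xtil t i ^ 2 + (1/(2*Γ)) * ∑ a, ∑ b, psitil t a b ^ 2 with hVdef
  -- component derivatives
  have hx_i : ∀ t, t₀ ≤ t → ∀ i, HasDerivAt (fun s => xtil s i)
      ((psitil t).mulVec (X t) i - k * xtil t i) t := by
    intro t ht i
    have h := (PiLp.proj (𝕜 := ℝ) 2 (fun _ : Fin n => ℝ) i).hasFDerivAt.comp_hasDerivAt t (hx t ht)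
    simpa [Function.comp_def] using h
  have hψ_ab : ∀ t, t₀ ≤ t → ∀ a b, HasDerivAt (fun s => psitil s a b)
      (-Γ * (xtil t a * X t b)) t := by
    intro t ht a b
    have h := (LinearMap.toContinuousLinearMap
      (Matrix.entryLinearMap ℝ ℝ a b : Matrix (Fin n) (Fin p) ℝ →ₗ[ℝ] ℝ)).hasFDerivAt.comp_hasDerivAt
      t (hψ t ht)
    simp only [Function.comp_def] at h
    refine h.congr_deriv ?_
    erw [LinearMap.coe_toContinuousLinearMap']
    show (-Γ • Matrix.vecMulVec (xtil t) (X t)) a b = _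
    simp [Matrix.vecMulVec_apply, mul_assoc]
  -- derivative of F
  have hF' : ∀ t, t₀ ≤ t → HasDerivAt F
      (∑ i, 2 * xtil t i ^ 1 * ((psitil t).mulVec (X t) i - k * xtil t i)) t := by
    intro t ht
    exact HasDerivAt.fun_sum fun i _ => by
      simpa using (hx_i t ht i).fun_pow 2
  -- derivative of V
  have hV' : ∀ t, t₀ ≤ t → HasDerivAt V (-k * F t) t := by
    intro t ht
    have h2 : HasDerivAt (fun s => ∑ a, ∑ b, psitil s a b ^ 2)
        (∑ a, ∑ b, 2 * psitil t a b ^ 1 * (-Γ * (xtil t a * X t b))) t :=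
      HasDerivAt.fun_sum fun a _ => HasDerivAt.fun_sum fun b _ => by
        simpa using (hψ_ab t ht a b).fun_pow 2
    have h := ((hF' t ht).const_mul (1/2 : ℝ)).add (h2.const_mul (1/(2*Γ) : ℝ))
    have e1 : ∑ i, 2 * xtil t i ^ 1 * ((psitil t).mulVec (X t) i - k * xtil t i)
        = 2 * (∑ i, xtil t i * (psitil t).mulVec (X t) i) - 2 * k * F t := by
      simp only [hFdef, Finset.mul_sum, ← Finset.sum_sub_distrib]
      exact Finset.sum_congr rfl fun i _ => by ring
    have e2 : ∑ a, ∑ b, 2 * psitil t a b ^ 1 * (-Γ * (xtil t a * X t b))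
        = -(2*Γ) * ∑ a, xtil t a * (psitil t).mulVec (X t) a := by
      rw [Finset.mul_sum]
      refine Finset.sum_congr rfl fun a _ => ?_
      simp only [Matrix.mulVec, dotProduct, Finset.mul_sum]
      exact Finset.sum_congr rfl fun b _ => by ring
    rw [e1, e2] at h
    have : (1/2 : ℝ) * (2 * (∑ i, xtil t i * (psitil t).mulVec (X t) i) - 2 * k * F t)
        + (1/(2*Γ)) * (-(2*Γ) * ∑ a, xtil t a * (psitil t).mulVec (X t) a) = -k * F t := by
      field_simp
      ring
    rwa [this] at h
  -- norms
  have hxnorm : ∀ s, ‖xtil s‖ ^ 2 = F s := by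
    intro s
    rw [EuclideanSpace.norm_eq, Real.sq_sqrt (by positivity)]
    exact Finset.sum_congr rfl fun i _ => by rw [Real.norm_eq_abs, sq_abs]
  have hψnorm : ‖psitil t₀‖ ^ 2 = ∑ a, ∑ b, psitil t₀ a b ^ 2 := by
    rw [Matrix.frobenius_norm_def, ← Real.rpow_natCast _ 2,
      ← Real.rpow_mul (by positivity)]
    norm_num
  have hVt₀ : (1/2) * ‖xtil t₀‖ ^ 2 + (1/(2*Γ)) * ‖psitil t₀‖ ^ 2 = V t₀ := by
    rw [hxnorm, hψnorm]
  -- nonnegativity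
  have hF0 : ∀ s, 0 ≤ F s := fun s => Finset.sum_nonneg fun i _ => sq_nonneg _
  have hV0 : ∀ s, 0 ≤ V s := by
    intro s
    have h1 : (0:ℝ) ≤ ∑ i, xtil s i ^ 2 := Finset.sum_nonneg fun i _ => sq_nonneg _
    have h2 : (0:ℝ) ≤ ∑ a, ∑ b, psitil s a b ^ 2 :=
      Finset.sum_nonneg fun a _ => Finset.sum_nonneg fun b _ => sq_nonneg _
    have h3 : (0:ℝ) ≤ 1/(2*Γ) := by positivity
    have h4 := mul_nonneg h3 h2
    have h5 : (0:ℝ) ≤ 1/2 * ∑ i, xtil s i ^ 2 := by positivity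
    show (0:ℝ) ≤ 1/2 * ∑ i, xtil s i ^ 2 + 1/(2*Γ) * ∑ a, ∑ b, psitil s a b ^ 2
    linarith
  -- continuity of F on [t₀, ∞)
  have hFc : ∀ t, t₀ ≤ t → ContinuousAt F t := fun t ht => (hF' t ht).continuousAt
  have hIntIoc : ∀ T : ℝ, IntegrableOn F (Set.Ioc t₀ T) volume := by
    intro T
    rcases le_or_gt T t₀ with h | h
    · rw [Set.Ioc_eq_empty (by exact fun hlt => absurd (lt_of_lt_of_le hlt h) (lt_irrefl _))]
      exact integrableOn_empty
    · refine (ContinuousOn.integrableOn_Icc ?_).mono_set Set.Ioc_subset_Icc_self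
      exact fun t ht => ((hFc t ht.1).continuousWithinAt)
  -- fundamental theorem of calculus
  have hFTC : ∀ T, t₀ ≤ T → (∫ s in t₀..T, -k * F s) = V T - V t₀ := by
    intro T hT
    refine intervalIntegral.integral_eq_sub_of_hasDerivAt (fun t ht => ?_) ?_
    · rw [Set.uIcc_of_le hT] at ht
      exact hV' t ht.1
    · refine (ContinuousOn.intervalIntegrable ?_)
      intro t ht
      rw [Set.uIcc_of_le hT] at ht
      exact (continuousAt_const.mul (hFc t ht.1)).continuousWithinAt
  have hbound : ∀ T, t₀ ≤ T → (∫ s in t₀..T, F s) ≤ V t₀ / k := by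
    intro T hT
    have h1 := hFTC T hT
    rw [intervalIntegral.integral_const_mul] at h1
    have h2 : (∫ s in t₀..T, F s) = (V t₀ - V T) / k := by
      field_simp
      nlinarith [h1]
    rw [h2]
    gcongr
    linarith [hV0 T]
  constructor
  · have : (fun s => ‖xtil s‖ ^ 2) = F := funext hxnorm
    rw [this, integrableOn_Ici_iff_integrableOn_Ioi]
    refine integrableOn_Ioi_of_intervalIntegral_norm_bounded (V t₀ / k) t₀
      (b := fun T : ℝ => T) (l := atTop) hIntIoc tendsto_id ?_
    filter_upwards [eventually_ge_atTop t₀] with T hT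
    have : (∫ x in t₀..T, ‖F x‖) = ∫ x in t₀..T, F x := by
      refine intervalIntegral.integral_congr fun x _ => Real.norm_of_nonneg (hF0 x)
    rw [this]
    exact hbound T hT
  · intro T hT
    have : (∫ s in t₀..T, ‖xtil s‖ ^ 2) = ∫ s in t₀..T, F s :=
      intervalIntegral.integral_congr fun s _ => hxnorm s
    rw [this, hVt₀]
    exact hbound T hT
end

section
/- (Barbalat-type lemma, as invoked in the proof of Theorem 1.) Let a : ℝ and let f : ℝ → ℝ be uniformly continuous on [a, ∞). If the limit lim_{t→∞} ∫_a^t f(s) ds exists and is finite, then f(t) → 0 as t → ∞. -/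
open Filter Topology

/-- (Barbalat-type lemma.) Let `a : ℝ` and let `f : ℝ → ℝ` be uniformly
continuous on `[a, ∞)`. If the limit `lim_{t→∞} ∫_a^t f(s) ds` exists and is finite,
then `f(t) → 0` as `t → ∞`. -/
theorem barbalat
    (a : ℝ) (f : ℝ → ℝ)
    (huc : UniformContinuousOn f (Set.Ici a))
    (L : ℝ)
    (hlim : Tendsto (fun t => ∫ s in a..t, f s) atTop (𝓝 L)) :
    Tendsto f atTop (𝓝 0) := by
  have hcont : ContinuousOn f (Set.Ici a) := huc.continuousOn
  by_contra hc
  rw [Metric.tendsto_atTop] at hc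
  push_neg at hc
  obtain ⟨ε, hε, hfreq⟩ := hc
  rw [Metric.uniformContinuousOn_iff] at huc
  obtain ⟨δ, hδ, hucd⟩ := huc (ε/2) (by linarith)
  have hint : ∀ t, a ≤ t → ∀ u, t ≤ u → IntervalIntegrable f MeasureTheory.volume t u := by
    intro t ht u hu
    apply ContinuousOn.intervalIntegrable
    apply hcont.mono
    rw [Set.uIcc_of_le hu]
    intro x hx
    exact le_trans ht hx.1
  have h2 : Tendsto (fun t => (∫ s in a..(t + δ/2), f s) - ∫ s in a..t, f s) atTop (𝓝 0) := by
    have := (hlim.comp (tendsto_atTop_add_const_right atTop (δ/2) tendsto_id)).sub hlim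
    simpa using this
  rw [Metric.tendsto_atTop] at h2
  obtain ⟨T, hT⟩ := h2 (ε * δ / 4) (by positivity)
  obtain ⟨t, ht, hft⟩ := hfreq (max a T)
  have hta : a ≤ t := le_trans (le_max_left _ _) ht
  have htT : T ≤ t := le_trans (le_max_right _ _) ht
  have hdiff : (∫ s in a..(t + δ/2), f s) - (∫ s in a..t, f s) = ∫ s in t..(t+δ/2), f s := by
    rw [← intervalIntegral.integral_add_adjacent_intervals (hint a le_rfl t hta)
      (hint t hta (t + δ/2) (by linarith))]
    ring
  have hsmall : |∫ s in t..(t+δ/2), f s| < ε * δ / 4 := by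
    have := hT t htT
    rw [Real.dist_eq, sub_zero, hdiff] at this
    exact this
  rw [Real.dist_eq, sub_zero] at hft
  have hclose : ∀ s ∈ Set.Icc t (t + δ/2), |f s - f t| < ε/2 := by
    intro s hs
    have hsa : s ∈ Set.Ici a := le_trans hta hs.1
    have hd : dist s t < δ := by
      rw [Real.dist_eq, abs_of_nonneg (by linarith [hs.1])]
      linarith [hs.2]
    have := hucd s hsa t (Set.mem_Ici.mpr hta) hd
    rwa [Real.dist_eq] at this
  have hif : IntervalIntegrable f MeasureTheory.volume t (t + δ/2) :=
    hint t hta _ (by linarith)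
  have hbig : ε * δ / 4 ≤ |∫ s in t..(t+δ/2), f s| := by
    rcases le_abs.mp hft with h | h
    · have hlow : ∀ s ∈ Set.Icc t (t + δ/2), ε/2 ≤ f s := by
        intro s hs
        have h1 := abs_lt.mp (hclose s hs)
        linarith [h1.1]
      have h1 : ∫ s in t..(t+δ/2), (ε/2 : ℝ) ≤ ∫ s in t..(t+δ/2), f s :=
        intervalIntegral.integral_mono_on (by linarith) intervalIntegrable_const hif hlow
      rw [intervalIntegral.integral_const, smul_eq_mul,
        show t + δ/2 - t = δ/2 by ring] at h1
      calc ε * δ / 4 = δ/2 * (ε/2) := by ring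
        _ ≤ ∫ s in t..(t+δ/2), f s := h1
        _ ≤ |∫ s in t..(t+δ/2), f s| := le_abs_self _
    · have hlow : ∀ s ∈ Set.Icc t (t + δ/2), f s ≤ -(ε/2) := by
        intro s hs
        have h1 := abs_lt.mp (hclose s hs)
        linarith [h1.2]
      have h1 : ∫ s in t..(t+δ/2), f s ≤ ∫ s in t..(t+δ/2), (-(ε/2) : ℝ) :=
        intervalIntegral.integral_mono_on (by linarith) hif intervalIntegrable_const hlow
      rw [intervalIntegral.integral_const, smul_eq_mul,
        show t + δ/2 - t = δ/2 by ring] at h1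
      calc ε * δ / 4 = -(δ/2 * -(ε/2)) := by ring
        _ ≤ -∫ s in t..(t+δ/2), f s := by linarith
        _ ≤ |∫ s in t..(t+δ/2), f s| := neg_le_abs _
  linarith
end

section
/- Under the coupled adaptive error dynamics, if additionally the regressor is bounded, i.e. there is C such that ‖X(t)‖ ≤ C for all t ≥ t₀, then the state estimation error converges: x̃(t) → 0 as t → ∞. (Claim 2 of Theorem 1.) -/
open Filter Topology

attribute [local instance] Matrix.frobeniusNormedAddCommGroup Matrix.frobeniusNormedSpace

open intervalIntegral in

lemma barbalat_s4 (t₀ L M : ℝ) (hL : 0 ≤ L) (f : ℝ → ℝ)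
    (hf0 : ∀ t, t₀ ≤ t → 0 ≤ f t)
    (hcont : ∀ t, t₀ ≤ t → ContinuousAt f t)
    (hlip : ∀ s u, t₀ ≤ s → s ≤ u → |f u - f s| ≤ L * (u - s))
    (hint : ∀ T, t₀ ≤ T → (∫ s in t₀..T, f s) ≤ M) :
    Tendsto f atTop (𝓝 0) := by
  -- interval integrability on subintervals of [t₀, ∞)
  have hig : ∀ s u : ℝ, t₀ ≤ s → s ≤ u → IntervalIntegrable f MeasureTheory.volume s u := by
    intro s u hs hsu
    apply ContinuousOn.intervalIntegrable
    apply continuousOn_of_forall_continuousAt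
    intro x hx
    rw [Set.uIcc_of_le hsu] at hx
    exact hcont x (hs.trans hx.1)
  rw [Metric.tendsto_atTop]
  intro ε hε
  by_contra hcon
  push_neg at hcon
  set δ : ℝ := ε / (2 * (L + 1)) with hδdef
  have hδpos : 0 < δ := div_pos hε (by linarith)
  have hLδ : L * δ ≤ ε / 2 := by
    rw [hδdef, mul_div_assoc', div_le_div_iff₀ (by linarith : (0:ℝ) < 2 * (L + 1)) (by norm_num : (0:ℝ) < 2)]
    nlinarith
  -- bump lower bound: integral over each bump
  set c : ℝ := δ * (ε / 2) with hcdef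
  have hcpos : 0 < c := mul_pos hδpos (by linarith)
  have key : ∀ N : ℕ, ∃ T, t₀ ≤ T ∧ (N : ℝ) * c ≤ ∫ s in t₀..T, f s := by
    intro N
    induction N with
    | zero => exact ⟨t₀, le_refl _, by simp⟩
    | succ N ih =>
      obtain ⟨T, hT, hI⟩ := ih
      obtain ⟨t, ht, hft⟩ := hcon (max T t₀)
      have ht₀ : t₀ ≤ t := (le_max_right _ _).trans ht
      have hTt : T ≤ t := (le_max_left _ _).trans ht
      rw [Real.dist_eq, sub_zero, abs_of_nonneg (hf0 t ht₀)] at hft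
      have hbump : ∀ x ∈ Set.Icc t (t + δ), ε / 2 ≤ f x := by
        intro x hx
        have h1 : |f x - f t| ≤ L * (x - t) := hlip t x ht₀ hx.1
        have h2 : L * (x - t) ≤ L * δ := by
          apply mul_le_mul_of_nonneg_left _ hL
          linarith [hx.2]
        have := abs_le.1 (h1.trans (h2.trans hLδ))
        linarith [this.1]
      refine ⟨t + δ, by linarith, ?_⟩
      have e1 : (∫ s in t₀..T, f s) + (∫ s in T..t, f s) = ∫ s in t₀..t, f s :=
        integral_add_adjacent_intervals (hig t₀ T le_rfl hT) (hig T t hT hTt)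
      have e2 : (∫ s in t₀..t, f s) + (∫ s in t..(t+δ), f s) = ∫ s in t₀..(t+δ), f s :=
        integral_add_adjacent_intervals (hig t₀ t le_rfl ht₀) (hig t (t + δ) ht₀ (by linarith))
      have h3 : (0:ℝ) ≤ ∫ s in T..t, f s := by
        apply integral_nonneg hTt
        intro x hx
        exact hf0 x ((hT.trans hx.1))
      have h4 : c ≤ ∫ s in t..(t+δ), f s := by
        have := integral_mono_on (by linarith : t ≤ t + δ)
          (_root_.intervalIntegrable_const (c := ε / 2)) (hig t (t + δ) ht₀ (by linarith)) hbump
        rw [integral_const] at this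
        simp only [smul_eq_mul] at this
        calc c = (t + δ - t) * (ε / 2) := by rw [hcdef]; ring_nf
        _ ≤ _ := this
      push_cast
      nlinarith
  obtain ⟨N, hN⟩ := exists_nat_gt (M / c)
  obtain ⟨T, hT, hI⟩ := key N
  have : (N : ℝ) * c ≤ M := hI.trans (hint T hT)
  rw [div_lt_iff₀ hcpos] at hN
  linarith




/-- (Claim 2 of Theorem 1.) Under the coupled adaptive error dynamics,
if additionally the regressor is bounded, i.e. there is `C` such that `‖X(t)‖ ≤ C` for all
`t ≥ t₀`, then the state estimation error converges: `x̃(t) → 0` as `t → ∞`. -/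
theorem xtil_tendsto_zero
    (n p : ℕ) (t₀ k Γ : ℝ) (hk : 0 < k) (hΓ : 0 < Γ)
    (xtil : ℝ → EuclideanSpace ℝ (Fin n))
    (psitil : ℝ → Matrix (Fin n) (Fin p) ℝ)
    (X : ℝ → EuclideanSpace ℝ (Fin p))
    (hx : ∀ t, t₀ ≤ t →
      HasDerivAt xtil ((show EuclideanSpace ℝ (Fin n) from WithLp.toLp 2 ((psitil t).mulVec (X t))) - k • xtil t) t)
    (hψ : ∀ t, t₀ ≤ t →
      HasDerivAt psitil (-Γ • Matrix.vecMulVec (xtil t) (X t)) t)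
    (C : ℝ) (hX : ∀ t, t₀ ≤ t → ‖X t‖ ≤ C) :
    Tendsto xtil atTop (𝓝 0) := by
  have hxc : ∀ t, t₀ ≤ t → ∀ a, HasDerivAt (fun t => xtil t a)
      ((psitil t).mulVec (X t) a - k * xtil t a) t := by
    intro t ht a
    have h := (EuclideanSpace.proj a).hasFDerivAt.comp_hasDerivAt t (hx t ht)
    simpa [Function.comp_def] using h
  have hψc : ∀ t, t₀ ≤ t → ∀ (a : Fin n) (b : Fin p),
      HasDerivAt (fun t => psitil t a b) (-Γ * (xtil t a * X t b)) t := by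
    intro t ht a b
    let e : Matrix (Fin n) (Fin p) ℝ →ₗ[ℝ] ℝ :=
      { toFun := fun M => M a b,
        map_add' := fun M N => rfl,
        map_smul' := fun c M => rfl }
    have h := (LinearMap.toContinuousLinearMap e).hasFDerivAt.comp_hasDerivAt t (hψ t ht)
    have he : ∀ M, (LinearMap.toContinuousLinearMap e) M = M a b := fun M => rfl
    simp only [Function.comp_def, he] at h
    refine h.congr_deriv ?_
    show (-Γ • Matrix.vecMulVec (xtil t) (X t)) a b = _
    simp [Matrix.smul_apply, Matrix.vecMulVec_apply, smul_eq_mul, mul_assoc]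
  set S : ℝ → ℝ := fun t => ∑ a, (xtil t a)^2 with hSdef
  set F : ℝ → ℝ := fun t => ∑ a, ∑ b, (psitil t a b)^2 with hFdef
  set G : ℝ → ℝ := fun t => S t + Γ⁻¹ * F t with hGdef
  set SD : ℝ → ℝ :=
    fun t => ∑ a, 2 * xtil t a * ((psitil t).mulVec (X t) a - k * xtil t a) with hSDdef
  have hSd : ∀ t, t₀ ≤ t → HasDerivAt S (SD t) t := by
    intro t ht
    have h := HasDerivAt.fun_sum (fun a (_ : a ∈ Finset.univ) => ((hxc t ht a).pow 2))
    refine h.congr_deriv ?_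
    symm
    rw [hSDdef]
    refine Finset.sum_congr rfl fun a _ => by push_cast; ring
  have hFd : ∀ t, t₀ ≤ t → HasDerivAt F
      (∑ a, ∑ b, 2 * psitil t a b * (-Γ * (xtil t a * X t b))) t := by
    intro t ht
    have h := HasDerivAt.fun_sum (fun a (_ : a ∈ Finset.univ) =>
      HasDerivAt.fun_sum (fun b (_ : b ∈ Finset.univ) => ((hψc t ht a b).pow 2)))
    refine h.congr_deriv ?_
    symm
    refine Finset.sum_congr rfl fun a _ => Finset.sum_congr rfl fun b _ => by push_cast; ring
  have hGd : ∀ t, t₀ ≤ t → HasDerivAt G (-(2*k*S t)) t := by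
    intro t ht
    have h := (hSd t ht).add ((hFd t ht).const_mul Γ⁻¹)
    refine h.congr_deriv ?_
    symm
    rw [hSDdef, hSdef, Finset.mul_sum, Finset.mul_sum, ← Finset.sum_add_distrib, ← Finset.sum_neg_distrib]
    refine Finset.sum_congr rfl fun a _ => ?_
    have hinner : Γ⁻¹ * ∑ b, 2 * psitil t a b * (-Γ * (xtil t a * X t b))
        = -(2 * xtil t a * (psitil t).mulVec (X t) a) := by
      rw [Finset.mul_sum, Matrix.mulVec, dotProduct, Finset.mul_sum, ← Finset.sum_neg_distrib]
      refine Finset.sum_congr rfl fun b _ => ?_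
      field_simp
    rw [hinner]
    ring
  -- continuity of S
  have hScont : ∀ t, t₀ ≤ t → ContinuousAt S t := by
    intro t ht
    have hxt : ContinuousAt xtil t := (hx t ht).differentiableAt.continuousAt
    have houter : Continuous (fun v : EuclideanSpace ℝ (Fin n) => ∑ a, (v a)^2) :=
      continuous_finset_sum _ fun a _ => ((EuclideanSpace.proj a).continuous.pow 2)
    exact (houter.continuousAt).comp hxt
  have hSnonneg : ∀ t, 0 ≤ S t := fun t =>
    Finset.sum_nonneg fun a _ => sq_nonneg _
  have hFnonneg : ∀ t, 0 ≤ F t := fun t =>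
    Finset.sum_nonneg fun a _ => Finset.sum_nonneg fun b _ => sq_nonneg _
  have hGt : ∀ t, G t = S t + Γ⁻¹ * F t := fun t => rfl
  have hGnonneg : ∀ t, 0 ≤ G t := by
    intro t
    rw [hGt]
    have : 0 ≤ Γ⁻¹ * F t := mul_nonneg (inv_nonneg.2 hΓ.le) (hFnonneg t)
    linarith [hSnonneg t]
  have hIntegS : ∀ s u, t₀ ≤ s → s ≤ u →
      IntervalIntegrable S MeasureTheory.volume s u := by
    intro s u hs hsu
    apply ContinuousOn.intervalIntegrable
    apply continuousOn_of_forall_continuousAt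
    intro x hx'
    rw [Set.uIcc_of_le hsu] at hx'
    exact hScont x (hs.trans hx'.1)
  have hFTC : ∀ s u, t₀ ≤ s → s ≤ u → (∫ x in s..u, 2*k*S x) = G s - G u := by
    intro s u hs hsu
    have h1 : (∫ x in s..u, -(2*k*S x)) = G u - G s := by
      apply intervalIntegral.integral_eq_sub_of_hasDerivAt
      · intro x hx'
        rw [Set.uIcc_of_le hsu] at hx'
        exact hGd x (hs.trans hx'.1)
      · exact (((hIntegS s u hs hsu).const_mul (2*k)).neg)
    have h2 : (∫ x in s..u, -(2*k*S x)) = -(∫ x in s..u, 2*k*S x) := by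
      simpa using intervalIntegral.integral_neg (f := fun x => 2*k*S x)
    rw [h2] at h1
    linarith
  set V0 : ℝ := G t₀ with hV0def
  have hV0 : 0 ≤ V0 := hGnonneg t₀
  have hGle : ∀ u, t₀ ≤ u → G u ≤ V0 := by
    intro u hu
    have h1 : 0 ≤ ∫ x in t₀..u, 2*k*S x := by
      apply intervalIntegral.integral_nonneg hu
      intro x _
      exact mul_nonneg (by linarith) (hSnonneg x)
    have := hFTC t₀ u le_rfl hu
    rw [hV0def]
    linarith
  have hSb : ∀ t, t₀ ≤ t → S t ≤ V0 := by
    intro t ht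
    have h1 : 0 ≤ Γ⁻¹ * F t := mul_nonneg (inv_nonneg.2 hΓ.le) (hFnonneg t)
    have h2 := hGle t ht
    rw [hGt] at h2
    exact le_trans (le_add_of_nonneg_right h1) h2
  have hFb : ∀ t, t₀ ≤ t → F t ≤ Γ * V0 := by
    intro t ht
    have h2 := hGle t ht
    rw [hGt] at h2
    have h3 : Γ⁻¹ * F t ≤ V0 := by linarith [hSnonneg t]
    calc F t = Γ * (Γ⁻¹ * F t) := by field_simp
    _ ≤ Γ * V0 := by exact mul_le_mul_of_nonneg_left h3 hΓ.le
  have hC0 : 0 ≤ C := (norm_nonneg (X t₀)).trans (hX t₀ le_rfl)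
  have hXb : ∀ t, t₀ ≤ t → ∑ b, (X t b)^2 ≤ C^2 := by
    intro t ht
    have h1 : ‖X t‖^2 ≤ C^2 := pow_le_pow_left₀ (norm_nonneg _) (hX t ht) 2
    have h2 : ‖X t‖^2 = ∑ b, (X t b)^2 := by
      rw [EuclideanSpace.norm_eq,
        Real.sq_sqrt (Finset.sum_nonneg fun b _ => sq_nonneg _)]
      exact Finset.sum_congr rfl fun b _ => by rw [Real.norm_eq_abs, sq_abs]
    rw [← h2]
    exact h1
  have hmb : ∀ t, t₀ ≤ t → ∀ a, ((psitil t).mulVec (X t) a)^2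
      ≤ (∑ b, (psitil t a b)^2) * C^2 := by
    intro t ht a
    have h1 : ((psitil t).mulVec (X t) a)^2
        ≤ (∑ b, (psitil t a b)^2) * (∑ b, (X t b)^2) := by
      simp only [Matrix.mulVec, dotProduct]
      exact Finset.sum_mul_sq_le_sq_mul_sq _ _ _
    exact h1.trans (mul_le_mul_of_nonneg_left (hXb t ht)
      (Finset.sum_nonneg fun b _ => sq_nonneg _))
  set L : ℝ := V0 + Γ * V0 * C^2 + 2*k*V0 with hLdef
  have hΓV0C2 : 0 ≤ Γ * V0 * C^2 := mul_nonneg (mul_nonneg hΓ.le hV0) (sq_nonneg C)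
  have h2kV0 : 0 ≤ 2*k*V0 := mul_nonneg (by linarith) hV0
  have hL0 : 0 ≤ L := by rw [hLdef]; linarith
  have hSDb : ∀ t, t₀ ≤ t → |SD t| ≤ L := by
    intro t ht
    have h1 : SD t = (∑ a, 2 * xtil t a * (psitil t).mulVec (X t) a) - 2*k*S t := by
      rw [hSDdef, hSdef]
      dsimp only
      rw [Finset.mul_sum, ← Finset.sum_sub_distrib]
      exact Finset.sum_congr rfl fun a _ => by ring
    have habs : |SD t| ≤ |∑ a, 2 * xtil t a * (psitil t).mulVec (X t) a| + 2*k*S t := by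
      rw [h1, sub_eq_add_neg]
      refine (abs_add_le _ _).trans ?_
      rw [abs_neg, abs_of_nonneg (mul_nonneg (by linarith) (hSnonneg t))]
    have hsum : |∑ a, 2 * xtil t a * (psitil t).mulVec (X t) a|
        ≤ S t + ∑ a, ((psitil t).mulVec (X t) a)^2 := by
      refine (Finset.abs_sum_le_sum_abs _ _).trans ?_
      rw [hSdef]
      dsimp only
      rw [← Finset.sum_add_distrib]
      refine Finset.sum_le_sum fun a _ => ?_
      have := two_mul_le_add_sq |xtil t a| |(psitil t).mulVec (X t) a|
      rw [sq_abs, sq_abs] at this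
      calc |2 * xtil t a * (psitil t).mulVec (X t) a|
          = 2 * |xtil t a| * |(psitil t).mulVec (X t) a| := by
            rw [abs_mul, abs_mul, abs_two]
        _ ≤ _ := this
    have hsm : ∑ a, ((psitil t).mulVec (X t) a)^2 ≤ Γ * V0 * C^2 := by
      calc ∑ a, ((psitil t).mulVec (X t) a)^2
          ≤ ∑ a, (∑ b, (psitil t a b)^2) * C^2 :=
            Finset.sum_le_sum fun a _ => hmb t ht a
        _ = F t * C^2 := by rw [hFdef]; dsimp only; rw [Finset.sum_mul]
        _ ≤ Γ * V0 * C^2 := mul_le_mul_of_nonneg_right (hFb t ht) (sq_nonneg C)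
    have hS1 := hSb t ht
    have hS0 := hSnonneg t
    rw [hLdef]
    have h2k : 2*k*S t ≤ 2*k*V0 := mul_le_mul_of_nonneg_left hS1 (by linarith)
    linarith
  -- Lipschitz estimate for S on [t₀, ∞)
  have hlipS : ∀ s u, t₀ ≤ s → s ≤ u → |S u - S s| ≤ L * (u - s) := by
    intro s u hs hsu
    have key := Convex.norm_image_sub_le_of_norm_hasDerivWithin_le
      (f := S) (f' := SD) (C := L) (s := Set.Ici t₀)
      (fun x hx' => (hSd x hx').hasDerivWithinAt)
      (fun x hx' => by rw [Real.norm_eq_abs]; exact hSDb x hx')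
      (convex_Ici t₀) (Set.mem_Ici.2 hs) (Set.mem_Ici.2 (hs.trans hsu))
    rw [Real.norm_eq_abs, Real.norm_eq_abs,
      abs_of_nonneg (by linarith : (0:ℝ) ≤ u - s)] at key
    exact key
  -- integral bound for S
  have hintS : ∀ T, t₀ ≤ T → (∫ s in t₀..T, S s) ≤ V0 / (2*k) := by
    intro T hT
    have h1 := hFTC t₀ T le_rfl hT
    have h2 : (∫ x in t₀..T, 2*k*S x) = (2*k) * ∫ x in t₀..T, S x :=
      intervalIntegral.integral_const_mul _ _
    have h3 : (2*k) * (∫ x in t₀..T, S x) ≤ V0 := by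
      rw [← h2, h1, hV0def]
      linarith [hGnonneg T]
    rw [le_div_iff₀ (by linarith : (0:ℝ) < 2*k)]
    linarith
  have hStend : Tendsto S atTop (𝓝 0) :=
    barbalat_s4 t₀ L (V0 / (2*k)) hL0 S (fun t _ => hSnonneg t) hScont hlipS hintS
  have hnorm : ∀ t, ‖xtil t‖ = Real.sqrt (S t) := by
    intro t
    rw [EuclideanSpace.norm_eq, hSdef]
    congr 1
    exact Finset.sum_congr rfl fun a _ => by rw [Real.norm_eq_abs, sq_abs]
  rw [tendsto_zero_iff_norm_tendsto_zero]
  have h2 : Tendsto (fun t => Real.sqrt (S t)) atTop (𝓝 0) := by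
    have := (Real.continuous_sqrt.tendsto 0).comp hStend
    simpa [Function.comp_def] using this
  simpa only [hnorm] using h2
end

section
/- Under the coupled adaptive error dynamics, if the regressor is bounded (‖X(t)‖ ≤ C for all t ≥ t₀), then the function f(t) = ‖x̃(t)‖² is Lipschitz continuous on [t₀, ∞) (with a Lipschitz constant depending only on k, Γ, C, ‖x̃(t₀)‖ and ‖ψ̃(t₀)‖_F); in particular f is uniformly continuous on [t₀, ∞). -/
open Filter Topology

attribute [local instance] Matrix.frobeniusNormedAddCommGroup Matrix.frobeniusNormedSpace

section entry
variable {n p : ℕ}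

lemma frob_norm_eq (M : Matrix (Fin n) (Fin p) ℝ) :
    ‖M‖ = Real.sqrt (∑ i, ∑ j, (M i j) ^ 2) := by
  rw [Matrix.frobenius_norm_def, Real.sqrt_eq_rpow]
  congr 2
  ext i
  congr 1
  ext j
  rw [show (2:ℝ) = ((2:ℕ):ℝ) by norm_num, Real.rpow_natCast]
  simp [sq_abs]

lemma abs_entry_le (M : Matrix (Fin n) (Fin p) ℝ) (a : Fin n) (b : Fin p) :
    |M a b| ≤ ‖M‖ := by
  rw [frob_norm_eq, ← Real.sqrt_sq_eq_abs]
  apply Real.sqrt_le_sqrt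
  calc (M a b)^2 ≤ ∑ j, (M a j)^2 :=
        Finset.single_le_sum (f := fun j => (M a j)^2) (fun j _ => sq_nonneg _)
          (Finset.mem_univ b)
    _ ≤ ∑ i, ∑ j, (M i j)^2 :=
        Finset.single_le_sum (f := fun i => ∑ j, (M i j)^2)
          (fun i _ => Finset.sum_nonneg fun j _ => sq_nonneg _) (Finset.mem_univ a)

noncomputable def entryCLM (a : Fin n) (b : Fin p) : Matrix (Fin n) (Fin p) ℝ →L[ℝ] ℝ :=
  LinearMap.mkContinuous
    { toFun := fun M => M a b
      map_add' := fun _ _ => rfl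
      map_smul' := fun _ _ => rfl } 1
    (fun M => by show ‖M a b‖ ≤ 1 * ‖M‖; simpa using abs_entry_le M a b)

@[simp] lemma entryCLM_apply (a : Fin n) (b : Fin p) (M : Matrix (Fin n) (Fin p) ℝ) :
    entryCLM a b M = M a b := rfl

end entry

/-- Under the coupled adaptive error dynamics, if the regressor is bounded
(`‖X(t)‖ ≤ C` for all `t ≥ t₀`), then the function `f(t) = ‖x̃(t)‖²` is Lipschitz continuous
on `[t₀, ∞)`; in particular `f` is uniformly continuous on `[t₀, ∞)`. -/
theorem xtil_sq_lipschitz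
    (n p : ℕ) (t₀ k Γ : ℝ) (hk : 0 < k) (hΓ : 0 < Γ)
    (xtil : ℝ → EuclideanSpace ℝ (Fin n))
    (psitil : ℝ → Matrix (Fin n) (Fin p) ℝ)
    (X : ℝ → EuclideanSpace ℝ (Fin p))
    (hx : ∀ t, t₀ ≤ t →
      HasDerivAt xtil ((show EuclideanSpace ℝ (Fin n) from WithLp.toLp 2 ((psitil t).mulVec (X t))) - k • xtil t) t)
    (hψ : ∀ t, t₀ ≤ t →
      HasDerivAt psitil (-Γ • Matrix.vecMulVec (xtil t) (X t)) t)
    (C : ℝ) (hX : ∀ t, t₀ ≤ t → ‖X t‖ ≤ C) :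
    (∃ L : NNReal, LipschitzOnWith L (fun t => ‖xtil t‖ ^ 2) (Set.Ici t₀)) ∧
    UniformContinuousOn (fun t => ‖xtil t‖ ^ 2) (Set.Ici t₀) := by
  have hxe : ∀ (i : Fin n) t, t₀ ≤ t →
      HasDerivAt (fun s => xtil s i) ((psitil t).mulVec (X t) i - k * xtil t i) t := by
    intro i t ht
    have h := (EuclideanSpace.proj i).hasFDerivAt.comp_hasDerivAt t (hx t ht)
    simp at h; exact h
  have hψe : ∀ (a : Fin n) (b : Fin p) t, t₀ ≤ t →
      HasDerivAt (fun s => psitil s a b) (-Γ * (xtil t a * X t b)) t := by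
    intro a b t ht
    have h := (entryCLM a b).hasFDerivAt.comp_hasDerivAt t (hψ t ht)
    simp [Matrix.vecMulVec_apply, Function.comp, neg_mul, mul_assoc] at h ⊢; exact h
  set F : ℝ → ℝ := fun s => ∑ i, (xtil s i)^2 with hFdef
  set S : ℝ → ℝ := fun s => ∑ a, ∑ b, (psitil s a b)^2 with hSdef
  have hfF : (fun t => ‖xtil t‖ ^ 2) = F := by
    funext t
    rw [EuclideanSpace.norm_eq, Real.sq_sqrt (by positivity)]
    simp [hFdef, sq_abs]
  have hFnn : ∀ t, 0 ≤ F t := fun t => Finset.sum_nonneg fun i _ => sq_nonneg _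
  have hSnn : ∀ t, 0 ≤ S t := fun t =>
    Finset.sum_nonneg fun a _ => Finset.sum_nonneg fun b _ => sq_nonneg _
  have hF : ∀ t, t₀ ≤ t → HasDerivAt F
      (∑ i, 2 * xtil t i * ((psitil t).mulVec (X t) i - k * xtil t i)) t := by
    intro t ht
    apply HasDerivAt.fun_sum
    intro i _
    have := (hxe i t ht).pow 2
    simp [mul_comm, mul_assoc, mul_left_comm] at this ⊢; exact this
  have hS : ∀ t, t₀ ≤ t → HasDerivAt S
      (∑ a, ∑ b, 2 * psitil t a b * (-Γ * (xtil t a * X t b))) t := by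
    intro t ht
    apply HasDerivAt.fun_sum
    intro a _
    apply HasDerivAt.fun_sum
    intro b _
    have := (hψe a b t ht).pow 2
    simp [mul_comm, mul_assoc, mul_left_comm] at this ⊢; exact this
  set V : ℝ → ℝ := fun s => F s + Γ⁻¹ * S s with hVdef
  have hV : ∀ t, t₀ ≤ t → HasDerivAt V (-(2*k) * F t) t := by
    intro t ht
    have h := (hF t ht).add ((hS t ht).const_mul Γ⁻¹)
    refine h.congr_deriv ?_
    have h1 : ∑ i, 2 * xtil t i * ((psitil t).mulVec (X t) i - k * xtil t i)
        = (∑ a, ∑ b, 2 * (psitil t a b * (xtil t a * X t b))) - 2*k*F t := by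
      simp only [Matrix.mulVec, dotProduct, hFdef]
      rw [Finset.mul_sum, ← Finset.sum_sub_distrib]
      refine Finset.sum_congr rfl fun i _ => ?_
      rw [mul_sub, Finset.mul_sum]
      congr 1
      · exact Finset.sum_congr rfl fun b _ => by ring
      · ring
    have h2 : Γ⁻¹ * ∑ a, ∑ b, 2 * psitil t a b * (-Γ * (xtil t a * X t b))
        = -(∑ a, ∑ b, 2 * (psitil t a b * (xtil t a * X t b))) := by
      rw [Finset.mul_sum, ← Finset.sum_neg_distrib]
      refine Finset.sum_congr rfl fun a _ => ?_
      rw [Finset.mul_sum, ← Finset.sum_neg_distrib]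
      refine Finset.sum_congr rfl fun b _ => ?_
      field_simp
    rw [h1, h2]
    ring
  -- V is antitone on [t₀, ∞)
  have hVanti : AntitoneOn V (Set.Ici t₀) := by
    apply antitoneOn_of_deriv_nonpos (convex_Ici t₀)
    · intro t ht
      exact ((hV t ht).continuousAt).continuousWithinAt
    · intro t ht
      rw [interior_Ici] at ht
      exact ((hV t (le_of_lt ht)).differentiableAt).differentiableWithinAt
    · intro t ht
      rw [interior_Ici] at ht
      rw [(hV t (le_of_lt ht)).deriv]
      have := hFnn t
      nlinarith
  set V₀ : ℝ := V t₀ with hV0def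
  have hV0nn : 0 ≤ V₀ := add_nonneg (hFnn t₀) (mul_nonneg (by positivity) (hSnn t₀))
  have hFle : ∀ t, t₀ ≤ t → F t ≤ V₀ := by
    intro t ht
    have := hVanti (Set.self_mem_Ici) ht ht
    have h2 : F t ≤ V t := le_add_of_nonneg_right (mul_nonneg (by positivity) (hSnn t))
    linarith
  have hSle : ∀ t, t₀ ≤ t → S t ≤ Γ * V₀ := by
    intro t ht
    have h1 := hVanti (Set.self_mem_Ici) ht ht
    have h2 : Γ⁻¹ * S t ≤ V t := le_add_of_nonneg_left (hFnn t)
    have h3 : Γ⁻¹ * S t ≤ V₀ := le_trans h2 h1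
    calc S t = Γ * (Γ⁻¹ * S t) := by field_simp
      _ ≤ Γ * V₀ := by nlinarith
  set C' : ℝ := max C 0 with hC'def
  have hXb : ∀ t, t₀ ≤ t → ∑ b, (X t b)^2 ≤ C'^2 := by
    intro t ht
    have h1 : ‖X t‖ ≤ C' := le_trans (hX t ht) (le_max_left _ _)
    have h2 : ‖X t‖^2 = ∑ b, (X t b)^2 := by
      rw [EuclideanSpace.norm_eq, Real.sq_sqrt (by positivity)]
      simp [sq_abs]
    nlinarith [norm_nonneg (X t)]
  -- bound on the derivative of F
  set Lr : ℝ := 2 * Real.sqrt V₀ * Real.sqrt (Γ * V₀ * C'^2) + 2 * k * V₀ with hLrdef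
  have hLrnn : 0 ≤ Lr := by positivity
  have hbound : ∀ t, t₀ ≤ t →
      |∑ i, 2 * xtil t i * ((psitil t).mulVec (X t) i - k * xtil t i)| ≤ Lr := by
    intro t ht
    set m : Fin n → ℝ := fun i => (psitil t).mulVec (X t) i with hmdef
    have hmsq : ∑ i, (m i)^2 ≤ Γ * V₀ * C'^2 := by
      have step : ∀ i, (m i)^2 ≤ (∑ b, (psitil t i b)^2) * (∑ b, (X t b)^2) := by
        intro i
        have := Finset.sum_mul_sq_le_sq_mul_sq Finset.univ (fun b => psitil t i b) (fun b => X t b)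
        simpa [hmdef, Matrix.mulVec, dotProduct] using this
      calc ∑ i, (m i)^2 ≤ ∑ i, (∑ b, (psitil t i b)^2) * (∑ b, (X t b)^2) :=
            Finset.sum_le_sum fun i _ => step i
        _ = S t * (∑ b, (X t b)^2) := by rw [hSdef, Finset.sum_mul]
        _ ≤ Γ * V₀ * C'^2 := by
            have h1 := hSle t ht
            have h2 := hXb t ht
            have h3 := hSnn t
            have h4 : 0 ≤ ∑ b, (X t b)^2 := Finset.sum_nonneg fun b _ => sq_nonneg _
            nlinarith
    have hcs : |∑ i, xtil t i * m i| ≤ Real.sqrt V₀ * Real.sqrt (Γ * V₀ * C'^2) := by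
      have h1 := Real.sum_mul_le_sqrt_mul_sqrt Finset.univ (fun i => xtil t i) m
      have h2 := Real.sum_mul_le_sqrt_mul_sqrt Finset.univ (fun i => -xtil t i) m
      have he : ∑ i, -xtil t i * m i = -∑ i, xtil t i * m i := by
        rw [← Finset.sum_neg_distrib]; exact Finset.sum_congr rfl fun i _ => by ring
      have hsq : ∑ i, (-xtil t i)^2 = ∑ i, (xtil t i)^2 :=
        Finset.sum_congr rfl fun i _ => by ring
      rw [he, hsq] at h2
      have hm : Real.sqrt (∑ i, xtil t i ^ 2) * Real.sqrt (∑ i, m i ^ 2)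
          ≤ Real.sqrt V₀ * Real.sqrt (Γ * V₀ * C'^2) := by
        apply mul_le_mul
        · exact Real.sqrt_le_sqrt (hFle t ht)
        · exact Real.sqrt_le_sqrt hmsq
        · positivity
        · positivity
      rw [abs_le]
      constructor
      · linarith
      · linarith
    have hexp : ∑ i, 2 * xtil t i * ((psitil t).mulVec (X t) i - k * xtil t i)
        = 2 * (∑ i, xtil t i * m i) - 2 * k * F t := by
      simp only [hFdef, Finset.mul_sum, ← Finset.sum_sub_distrib]
      exact Finset.sum_congr rfl fun i _ => by simp only [hmdef]; ring
    rw [hexp]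
    have hF1 := hFnn t
    have hF2 := hFle t ht
    rw [abs_le] at hcs ⊢
    constructor <;> nlinarith
  -- Lipschitz
  have hlip : LipschitzOnWith Lr.toNNReal (fun t => ‖xtil t‖ ^ 2) (Set.Ici t₀) := by
    rw [hfF]
    apply (convex_Ici t₀).lipschitzOnWith_of_nnnorm_hasDerivWithin_le
      (f' := fun t => ∑ i, 2 * xtil t i * ((psitil t).mulVec (X t) i - k * xtil t i))
    · intro t ht
      exact (hF t ht).hasDerivWithinAt
    · intro t ht
      rw [← NNReal.coe_le_coe, coe_nnnorm, Real.coe_toNNReal _ hLrnn]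
      simpa [Real.norm_eq_abs] using hbound t ht
  exact ⟨⟨Lr.toNNReal, hlip⟩, hlip.uniformContinuousOn⟩
end

section
/- (Corollary 1.) Under the coupled adaptive error dynamics, if x̃(t₀) = 0 and ‖ψ̃(t₀)‖_F ≤ D for some D ≥ 0, then for every t ≥ t₀ one has ‖x̃(t)‖ ≤ √(1/Γ) · D. -/
open Filter Topology

attribute [local instance] Matrix.frobeniusNormedAddCommGroup Matrix.frobeniusNormedSpace

private lemma frob_sq_sum {n p : ℕ} (A : Matrix (Fin n) (Fin p) ℝ) :
    ∑ a, ∑ b, (A a b) ^ 2 = ‖A‖ ^ 2 := by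
  rw [Matrix.frobenius_norm_def]
  rw [← Real.rpow_natCast ((∑ a, ∑ b, ‖A a b‖ ^ (2:ℝ)) ^ (1/2 : ℝ)) 2]
  rw [← Real.rpow_mul (by positivity)]
  norm_num

/-- (Corollary 1.) Under the coupled adaptive error dynamics, if
`x̃(t₀) = 0` and `‖ψ̃(t₀)‖_F ≤ D` for some `D ≥ 0`, then for every `t ≥ t₀` one has
`‖x̃(t)‖ ≤ √(1/Γ) · D`. -/
theorem xtil_norm_bound
    (n p : ℕ) (t₀ k Γ : ℝ) (hk : 0 < k) (hΓ : 0 < Γ)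
    (xtil : ℝ → EuclideanSpace ℝ (Fin n))
    (psitil : ℝ → Matrix (Fin n) (Fin p) ℝ)
    (X : ℝ → EuclideanSpace ℝ (Fin p))
    (hx : ∀ t, t₀ ≤ t →
      HasDerivAt xtil ((show EuclideanSpace ℝ (Fin n) from WithLp.toLp 2 ((psitil t).mulVec (X t))) - k • xtil t) t)
    (hψ : ∀ t, t₀ ≤ t →
      HasDerivAt psitil (-Γ • Matrix.vecMulVec (xtil t) (X t)) t)
    (D : ℝ) (hD : 0 ≤ D)
    (hx0 : xtil t₀ = 0) (hψ0 : ‖psitil t₀‖ ≤ D) :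
    ∀ t, t₀ ≤ t → ‖xtil t‖ ≤ Real.sqrt (1/Γ) * D := by
  -- Lyapunov function
  set V : ℝ → ℝ := fun t => (∑ i, (xtil t i) ^ 2) + (1/Γ) * ∑ a, ∑ b, (psitil t a b) ^ 2 with hV
  -- entrywise derivatives
  have hxent : ∀ t, t₀ ≤ t → ∀ i, HasDerivAt (fun s => xtil s i)
      ((psitil t).mulVec (X t) i - k * xtil t i) t := by
    intro t ht i
    have := (PiLp.proj (𝕜 := ℝ) (p := 2) (β := fun _ : Fin n => ℝ) i).hasFDerivAt.comp_hasDerivAt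
      t (hx t ht)
    simp at this; exact this
  have hψent : ∀ t, t₀ ≤ t → ∀ a b, HasDerivAt (fun s => psitil s a b)
      (-Γ * (xtil t a * X t b)) t := by
    intro t ht a b
    have h1 := (ContinuousLinearMap.proj (R := ℝ)
      (φ := fun _ : Fin n => Fin p → ℝ) a).hasFDerivAt.comp_hasDerivAt
      t (hψ t ht)
    have h2 := (ContinuousLinearMap.proj (R := ℝ)
      (φ := fun _ : Fin p => ℝ) b).hasFDerivAt.comp_hasDerivAt t h1
    exact h2.congr_deriv (by change (-Γ • Matrix.vecMulVec (xtil t) (X t)) a b = _; simp [Matrix.vecMulVec_apply, mul_assoc])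
  -- derivative of V
  have hVd : ∀ t, t₀ ≤ t → HasDerivAt V (-2 * k * ∑ i, (xtil t i) ^ 2) t := by
    intro t ht
    have h1 : HasDerivAt (fun s => ∑ i, (xtil s i) ^ 2)
        (∑ i, 2 * xtil t i * ((psitil t).mulVec (X t) i - k * xtil t i)) t := by
      apply HasDerivAt.fun_sum
      intro i _
      have := (hxent t ht i).fun_pow 2
      simp [mul_comm, mul_assoc, mul_left_comm] at this; exact this.congr_deriv (by ring)
    have h2 : HasDerivAt (fun s => ∑ a, ∑ b, (psitil s a b) ^ 2)
        (∑ a, ∑ b, 2 * psitil t a b * (-Γ * (xtil t a * X t b))) t := by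
      apply HasDerivAt.fun_sum
      intro a _
      apply HasDerivAt.fun_sum
      intro b _
      have := (hψent t ht a b).fun_pow 2
      simp [mul_comm, mul_assoc, mul_left_comm] at this; exact this.congr_deriv (by ring)
    have h3 := h1.add (h2.const_mul (1/Γ))
    refine h3.congr_deriv ?_
    have hΓ' : Γ ≠ 0 := ne_of_gt hΓ
    have e1 : (1/Γ) * ∑ a, ∑ b, 2 * psitil t a b * (-Γ * (xtil t a * X t b))
        = - 2 * ∑ a, ∑ b, psitil t a b * (xtil t a * X t b) := by
      rw [Finset.mul_sum, Finset.mul_sum]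
      congr 1; ext a
      rw [Finset.mul_sum, Finset.mul_sum]
      congr 1; ext b
      field_simp
    rw [e1]
    have e2 : ∑ i, 2 * xtil t i * ((psitil t).mulVec (X t) i - k * xtil t i)
        = 2 * (∑ i, ∑ b, xtil t i * (psitil t i b * X t b)) - 2 * k * ∑ i, (xtil t i)^2 := by
      rw [Finset.mul_sum, Finset.mul_sum, ← Finset.sum_sub_distrib]
      refine Finset.sum_congr rfl fun i _ => ?_
      have hmv : (psitil t).mulVec (X t) i = ∑ b, psitil t i b * X t b := rfl
      rw [hmv, mul_sub]
      congr 1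
      · rw [Finset.mul_sum, Finset.mul_sum]
        exact Finset.sum_congr rfl fun b _ => by ring
      · ring
    rw [e2]
    have e3 : ∑ a, ∑ b, psitil t a b * (xtil t a * X t b)
        = ∑ i, ∑ b, xtil t i * (psitil t i b * X t b) := by
      congr 1; ext a; congr 1; ext b; ring
    rw [e3]; ring
  -- V is antitone on Ici t₀
  have hanti : AntitoneOn V (Set.Ici t₀) := by
    apply antitoneOn_of_deriv_nonpos (convex_Ici t₀)
    · intro s hs
      exact (hVd s hs).continuousAt.continuousWithinAt
    · intro s hs
      rw [interior_Ici] at hs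
      exact ((hVd s (le_of_lt hs)).differentiableAt.differentiableWithinAt)
    · intro s hs
      rw [interior_Ici] at hs
      rw [(hVd s (le_of_lt hs)).deriv]
      have : (0:ℝ) ≤ ∑ i, (xtil s i) ^ 2 := by positivity
      nlinarith
  intro t ht
  have hle : V t ≤ V t₀ := hanti (Set.self_mem_Ici) ht ht
  have hVt₀ : V t₀ ≤ (1/Γ) * D ^ 2 := by
    have h0 : ∑ i, (xtil t₀ i) ^ 2 = 0 := by
      rw [hx0]; simp
    rw [hV]
    simp only [h0, zero_add]
    rw [frob_sq_sum]
    have : ‖psitil t₀‖ ^ 2 ≤ D ^ 2 := by nlinarith [norm_nonneg (psitil t₀)]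
    have h1Γ : (0:ℝ) < 1/Γ := by positivity
    nlinarith
  have hxsq : ‖xtil t‖ ^ 2 ≤ (Real.sqrt (1/Γ) * D) ^ 2 := by
    have hnorm : ‖xtil t‖ ^ 2 = ∑ i, (xtil t i) ^ 2 := by
      rw [EuclideanSpace.norm_eq, Real.sq_sqrt (by positivity)]
      congr 1; ext i; rw [Real.norm_eq_abs, sq_abs]
    have hsum : ∑ i, (xtil t i) ^ 2 ≤ V t := by
      rw [hV]
      have : (0:ℝ) ≤ (1/Γ) * ∑ a, ∑ b, (psitil t a b) ^ 2 := by positivity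
      linarith
    have hrhs : (Real.sqrt (1/Γ) * D) ^ 2 = (1/Γ) * D ^ 2 := by
      rw [mul_pow, Real.sq_sqrt (by positivity)]
    rw [hnorm, hrhs]
    calc ∑ i, (xtil t i) ^ 2 ≤ V t := hsum
      _ ≤ V t₀ := hle
      _ ≤ (1/Γ) * D ^ 2 := hVt₀
  have hrhs0 : 0 ≤ Real.sqrt (1/Γ) * D := by positivity
  nlinarith [norm_nonneg (xtil t)]
end

section
/- (Lemma 3: the true parameter remains in the adaptive model set.) Under the multi-model adaptive update law, suppose the convex weights α₁,…,α_q satisfy α_i ≥ 0, ∑_{i=1}^q α_i = 1, ∑_{i=1}^q α_i • ψ̂_i(t₀) = Θ, and x̃_i(t₀) = 0 for every i. Then for every t ≥ t₀ one has ∑_{i=1}^q α_i • ψ̂_i(t) = Θ; in particular Θ belongs to the convex hull of {ψ̂_1(t), …, ψ̂_q(t)} for every t ≥ t₀. -/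
open Filter Topology

attribute [local instance] Matrix.frobeniusNormedAddCommGroup Matrix.frobeniusNormedSpace

lemma hasDerivAt_euclid_apply {n : ℕ} {F : ℝ → EuclideanSpace ℝ (Fin n)}
    {F' : EuclideanSpace ℝ (Fin n)} {t : ℝ} (hF : HasDerivAt F F' t) (i : Fin n) :
    HasDerivAt (fun s => F s i) (F' i) t := by
  exact ((EuclideanSpace.proj (𝕜 := ℝ) i).hasFDerivAt.comp_hasDerivAt t hF)

lemma hasDerivAt_matrix_entry {n p : ℕ} {F : ℝ → Matrix (Fin n) (Fin p) ℝ}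
    {F' : Matrix (Fin n) (Fin p) ℝ} {t : ℝ} (hF : HasDerivAt F F' t) (i : Fin n) (j : Fin p) :
    HasDerivAt (fun s => F s i j) (F' i j) t := by
  let L : Matrix (Fin n) (Fin p) ℝ →ₗ[ℝ] ℝ :=
    { toFun := fun A => A i j, map_add' := fun _ _ => rfl, map_smul' := fun _ _ => rfl }
  exact L.toContinuousLinearMap.hasFDerivAt.comp_hasDerivAt t hF

/-- (Lemma 3: the true parameter remains in the adaptive model set.)
Under the multi-model adaptive update law, suppose the convex weights `α₁,…,α_q` satisfy
`αᵢ ≥ 0`, `∑ αᵢ = 1`, `∑ αᵢ • ψ̂ᵢ(t₀) = Θ`, and `x̃ᵢ(t₀) = 0` for every `i`. Then for every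
`t ≥ t₀` one has `∑ αᵢ • ψ̂ᵢ(t) = Θ`; in particular `Θ` belongs to the convex hull of
`{ψ̂₁(t), …, ψ̂_q(t)}` for every `t ≥ t₀`. -/
theorem true_parameter_stays_in_model_set
    (n p q : ℕ) (t₀ k Γ : ℝ) (hk : 0 < k) (hΓ : 0 < Γ)
    (Θ : Matrix (Fin n) (Fin p) ℝ)
    (X : ℝ → EuclideanSpace ℝ (Fin p))
    (ψh : Fin q → ℝ → Matrix (Fin n) (Fin p) ℝ)
    (xtil : Fin q → ℝ → EuclideanSpace ℝ (Fin n))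
    (hx : ∀ i, ∀ t, t₀ ≤ t →
      HasDerivAt (xtil i)
        ((show EuclideanSpace ℝ (Fin n) from WithLp.toLp 2 ((Θ - ψh i t).mulVec (X t))) - k • xtil i t) t)
    (hψ : ∀ i, ∀ t, t₀ ≤ t →
      HasDerivAt (ψh i) (Γ • Matrix.vecMulVec (xtil i t) (X t)) t)
    (α : Fin q → ℝ) (hα0 : ∀ i, 0 ≤ α i) (hα1 : ∑ i, α i = 1)
    (hinit : ∑ i, α i • ψh i t₀ = Θ)
    (hx0 : ∀ i, xtil i t₀ = 0) :
    ∀ t, t₀ ≤ t →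
      (∑ i, α i • ψh i t = Θ) ∧
      Θ ∈ convexHull ℝ (Set.range fun i => ψh i t) := by
  set E : ℝ → Fin n → ℝ := fun s i => ∑ l, α l * xtil l s i with hE_def
  set S : ℝ → Fin n → Fin p → ℝ :=
    fun s i j => (∑ l, α l * ψh l s i j) - Θ i j with hS_def
  set W : ℝ → ℝ := fun s => Γ * ∑ i, (E s i) ^ 2 + ∑ i, ∑ j, (S s i j) ^ 2 with hW_def
  have hW : ∀ s, t₀ ≤ s → HasDerivAt W (-(2 * k * Γ) * ∑ i, (E s i) ^ 2) s := by
    intro s hs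
    have hEi : ∀ i, HasDerivAt (fun u => E u i)
        (-(∑ j, S s i j * X s j) - k * E s i) s := by
      intro i
      have h1 : HasDerivAt (fun u => E u i)
          (∑ l, α l * (((Θ - ψh l s).mulVec (X s)) i - k * xtil l s i)) s := by
        apply HasDerivAt.fun_sum
        intro l _
        exact (hasDerivAt_euclid_apply (hx l s hs) i).const_mul (α l)
      convert h1 using 1
      have step : ∀ l, α l * (((Θ - ψh l s).mulVec (X s)) i - k * xtil l s i)
          = (∑ j, α l * ((Θ i j - ψh l s i j) * X s j)) - k * (α l * xtil l s i) := by
        intro l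
        simp only [Matrix.mulVec, dotProduct, Matrix.sub_apply, mul_sub,
          Finset.mul_sum]
        ring
      rw [Finset.sum_congr rfl fun l _ => step l, Finset.sum_sub_distrib,
        Finset.sum_comm, ← Finset.mul_sum]
      congr 1
      · rw [← Finset.sum_neg_distrib]
        refine Finset.sum_congr rfl fun j _ => ?_
        have hsum : ∑ l, α l * ((Θ i j - ψh l s i j) * X s j)
            = (∑ l, α l) * (Θ i j * X s j) - (∑ l, α l * ψh l s i j) * X s j := by
          rw [Finset.sum_mul, Finset.sum_mul, ← Finset.sum_sub_distrib]
          refine Finset.sum_congr rfl fun l _ => ?_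
          ring
        rw [hsum, hα1, hS_def]
        ring
    have hSij : ∀ i j, HasDerivAt (fun u => S u i j) (Γ * (E s i * X s j)) s := by
      intro i j
      have h1 : HasDerivAt (fun u => ∑ l, α l * ψh l u i j)
          (∑ l, α l * (Γ * (xtil l s i * X s j))) s := by
        apply HasDerivAt.fun_sum
        intro l _
        have h := (hasDerivAt_matrix_entry (hψ l s hs) i j).const_mul (α l)
        simpa [Matrix.vecMulVec_apply, Matrix.smul_apply, smul_eq_mul] using h
      have h2 := h1.sub_const (Θ i j)
      refine h2.congr_deriv (Eq.symm ?_)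
      simp only [hE_def]
      rw [Finset.sum_mul, Finset.mul_sum]
      refine Finset.sum_congr rfl fun l _ => ?_
      ring
    have hsq1 : HasDerivAt (fun u => ∑ i, (E u i) ^ 2)
        (∑ i, (2 : ℕ) * (E s i) ^ 1 * (-(∑ j, S s i j * X s j) - k * E s i)) s :=
      HasDerivAt.fun_sum fun i _ => (hEi i).fun_pow 2
    have hsq2 : HasDerivAt (fun u => ∑ i, ∑ j, (S u i j) ^ 2)
        (∑ i, ∑ j, (2 : ℕ) * (S s i j) ^ 1 * (Γ * (E s i * X s j))) s :=
      HasDerivAt.fun_sum fun i _ => HasDerivAt.fun_sum fun j _ => (hSij i j).fun_pow 2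
    have htot := (hsq1.const_mul Γ).add hsq2
    refine htot.congr_deriv (Eq.symm ?_)
    push_cast
    rw [show -(2 * k * Γ) * ∑ i, E s i ^ 2 = ∑ i, -(2 * k * Γ) * E s i ^ 2 from
        Finset.mul_sum _ _ _,
      show Γ * ∑ i, (2 : ℝ) * E s i ^ 1 * (-(∑ j, S s i j * X s j) - k * E s i)
          = ∑ i, Γ * ((2 : ℝ) * E s i ^ 1 * (-(∑ j, S s i j * X s j) - k * E s i)) from
        Finset.mul_sum _ _ _,
      ← Finset.sum_add_distrib]
    refine Finset.sum_congr rfl fun i _ => ?_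
    have h3 : ∑ j, (2 : ℝ) * S s i j ^ 1 * (Γ * (E s i * X s j))
        = ∑ j, Γ * (2 * E s i * (S s i j * X s j)) :=
      Finset.sum_congr rfl fun j _ => by ring
    rw [h3, ← Finset.mul_sum, ← Finset.mul_sum]
    ring
  have hcont : ContinuousOn W (Set.Ici t₀) :=
    fun s hs => (hW s hs).continuousAt.continuousWithinAt
  have hderivint : ∀ x ∈ interior (Set.Ici t₀),
      HasDerivAt W (-(2 * k * Γ) * ∑ i, (E x i) ^ 2) x := by
    intro x hx'
    rw [interior_Ici] at hx'
    exact hW x (le_of_lt hx')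
  have hanti : AntitoneOn W (Set.Ici t₀) := by
    apply antitoneOn_of_deriv_nonpos (convex_Ici t₀) hcont
    · intro x hx'
      exact (hderivint x hx').differentiableAt.differentiableWithinAt
    · intro x hx'
      rw [(hderivint x hx').deriv]
      have h1 : (0 : ℝ) ≤ ∑ i, (E x i) ^ 2 := Finset.sum_nonneg fun i _ => sq_nonneg _
      have h2 : (0 : ℝ) ≤ (2 * k * Γ) * ∑ i, (E x i) ^ 2 :=
        mul_nonneg (by positivity) h1
      linarith
  have hW0 : W t₀ = 0 := by
    have hE0 : ∀ i, E t₀ i = 0 := by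
      intro i
      simp only [hE_def]
      rw [Finset.sum_eq_zero]
      intro l _
      rw [hx0 l]
      simp
    have hS0 : ∀ i j, S t₀ i j = 0 := by
      intro i j
      have h := congrFun (congrFun hinit i) j
      simp only [hS_def]
      rw [sub_eq_zero, ← h, Matrix.sum_apply]
      refine Finset.sum_congr rfl fun l _ => ?_
      simp [Matrix.smul_apply]
    simp only [hW_def]
    simp [hE0, hS0]
  intro t ht
  have hle : W t ≤ 0 := hW0 ▸ hanti Set.self_mem_Ici ht ht
  have hEnn : 0 ≤ Γ * ∑ i, (E t i) ^ 2 :=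
    mul_nonneg hΓ.le (Finset.sum_nonneg fun i _ => sq_nonneg _)
  have hSnn : 0 ≤ ∑ i, ∑ j, (S t i j) ^ 2 :=
    Finset.sum_nonneg fun i _ => Finset.sum_nonneg fun j _ => sq_nonneg _
  have hSsum0 : ∑ i, ∑ j, (S t i j) ^ 2 = 0 := by
    have hWt : W t = Γ * ∑ i, (E t i) ^ 2 + ∑ i, ∑ j, (S t i j) ^ 2 := by
      rw [hW_def]
    linarith
  have hS0 : ∀ i j, S t i j = 0 := by
    intro i j
    have h1 := (Finset.sum_eq_zero_iff_of_nonneg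
      (fun i _ => Finset.sum_nonneg fun j _ => sq_nonneg (S t i j))).1 hSsum0 i
      (Finset.mem_univ i)
    have h2 := (Finset.sum_eq_zero_iff_of_nonneg
      (fun j _ => sq_nonneg (S t i j))).1 h1 j (Finset.mem_univ j)
    exact sq_eq_zero_iff.1 h2
  have hmain : ∑ i, α i • ψh i t = Θ := by
    ext i j
    have h := hS0 i j
    simp only [hS_def, sub_eq_zero] at h
    rw [Matrix.sum_apply, ← h]
    refine Finset.sum_congr rfl fun l _ => ?_
    simp [Matrix.smul_apply]
  refine ⟨hmain, ?_⟩
  rw [← hmain]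
  exact (convex_convexHull ℝ _).sum_mem (fun i _ => hα0 i) hα1
    (fun i _ => subset_convexHull ℝ _ ⟨i, rfl⟩)
end

section
/- (Theorem 2: the diameter of the adaptive model set is non-increasing.) Under the multi-model adaptive update law, if all vertex state estimation errors agree initially (x̃_i(t₀) = x̃_j(t₀) for all i, j), then for every t ≥ t₀ the metric diameter of the adaptive model set S(t) = convexHull ℝ {ψ̂_1(t), …, ψ̂_q(t)} satisfies diam(S(t)) ≤ diam(S(t₀)). -/
open Filter Topology

attribute [local instance] Matrix.frobeniusNormedAddCommGroup Matrix.frobeniusNormedSpace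

/-- (Theorem 2: the diameter of the adaptive model set is non-increasing.)
Under the multi-model adaptive update law, if all vertex state estimation errors agree
initially (`x̃ᵢ(t₀) = x̃ⱼ(t₀)` for all `i, j`), then for every `t ≥ t₀` the metric diameter of
the adaptive model set `S(t) = convexHull ℝ {ψ̂₁(t), …, ψ̂_q(t)}` satisfies
`diam(S(t)) ≤ diam(S(t₀))`. -/
theorem model_set_diameter_nonincreasing
    (n p q : ℕ) (t₀ k Γ : ℝ) (hk : 0 < k) (hΓ : 0 < Γ)
    (Θ : Matrix (Fin n) (Fin p) ℝ)
    (X : ℝ → EuclideanSpace ℝ (Fin p))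
    (ψh : Fin q → ℝ → Matrix (Fin n) (Fin p) ℝ)
    (xtil : Fin q → ℝ → EuclideanSpace ℝ (Fin n))
    (hx : ∀ i, ∀ t, t₀ ≤ t →
      HasDerivAt (xtil i)
        ((show EuclideanSpace ℝ (Fin n) from WithLp.toLp 2 ((Θ - ψh i t).mulVec (X t))) - k • xtil i t) t)
    (hψ : ∀ i, ∀ t, t₀ ≤ t →
      HasDerivAt (ψh i) (Γ • Matrix.vecMulVec (xtil i t) (X t)) t)
    (hinit : ∀ i j, xtil i t₀ = xtil j t₀) :
    ∀ t, t₀ ≤ t →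
      Metric.diam (convexHull ℝ (Set.range fun i => ψh i t)) ≤
        Metric.diam (convexHull ℝ (Set.range fun i => ψh i t₀)) := by
  -- entry evaluation CLM on matrices
  intro t ht
  set E : ∀ (a : Fin n) (b : Fin p), Matrix (Fin n) (Fin p) ℝ →L[ℝ] ℝ :=
    fun a b => LinearMap.toContinuousLinearMap
      ((LinearMap.proj b).comp (LinearMap.proj (R := ℝ) (φ := fun _ : Fin n => Fin p → ℝ) a))
    with hE
  have hEapp : ∀ a b (M : Matrix (Fin n) (Fin p) ℝ), E a b M = M a b := fun _ _ _ => rfl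
  -- key pairwise norm estimate
  have key : ∀ i j : Fin q, ‖ψh i t - ψh j t‖ ≤ ‖ψh i t₀ - ψh j t₀‖ := by
    intro i j
    set F : ℝ → ℝ := fun s =>
      (∑ a, ∑ b, (ψh i s a b - ψh j s a b) ^ 2)
        + Γ * ∑ a, (xtil i s a - xtil j s a) ^ 2 with hF
    have hFderiv : ∀ s, t₀ ≤ s →
        HasDerivAt F (-(2 * k * Γ) * ∑ a, (xtil i s a - xtil j s a) ^ 2) s := by
      intro s hs
      have hDent : ∀ a b, HasDerivAt (fun u => ψh i u a b - ψh j u a b)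
          (Γ * (xtil i s a * X s b) - Γ * (xtil j s a * X s b)) s := by
        intro a b
        have h1 := ((E a b).hasFDerivAt.comp_hasDerivAt s (hψ i s hs))
        have h2 := ((E a b).hasFDerivAt.comp_hasDerivAt s (hψ j s hs))
        simp only [Function.comp, hEapp, Matrix.smul_apply, Matrix.vecMulVec_apply,
          smul_eq_mul] at h1 h2
        exact h1.sub h2
      have hxent : ∀ a : Fin n, HasDerivAt (fun u => xtil i u a - xtil j u a)
          (((Θ - ψh i s).mulVec (X s) a - k * xtil i s a)
            - ((Θ - ψh j s).mulVec (X s) a - k * xtil j s a)) s := by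
        intro a
        have h1 := ((EuclideanSpace.proj a).hasFDerivAt.comp_hasDerivAt s (hx i s hs))
        have h2 := ((EuclideanSpace.proj a).hasFDerivAt.comp_hasDerivAt s (hx j s hs))
        simp only [Function.comp, PiLp.proj_apply, PiLp.sub_apply,
          PiLp.smul_apply, smul_eq_mul] at h1 h2
        exact h1.sub h2
      have hd1 : HasDerivAt (fun u => ∑ a, ∑ b, (ψh i u a b - ψh j u a b) ^ 2)
          (∑ a, ∑ b, (2 * (ψh i s a b - ψh j s a b) ^ 1 *
            (Γ * (xtil i s a * X s b) - Γ * (xtil j s a * X s b)))) s := by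
        exact HasDerivAt.fun_sum fun a _ => HasDerivAt.fun_sum fun b _ => (hDent a b).pow 2
      have hd2 : HasDerivAt (fun u => Γ * ∑ a, (xtil i u a - xtil j u a) ^ 2)
          (Γ * ∑ a, (2 * (xtil i s a - xtil j s a) ^ 1 *
            (((Θ - ψh i s).mulVec (X s) a - k * xtil i s a)
              - ((Θ - ψh j s).mulVec (X s) a - k * xtil j s a)))) s :=
        HasDerivAt.const_mul Γ (HasDerivAt.fun_sum fun a _ => (hxent a).pow 2)
      have := hd1.add hd2
      refine this.congr_deriv (Eq.symm ?_)
      rw [Finset.mul_sum]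
      conv_rhs => rw [Finset.mul_sum]
      rw [← Finset.sum_add_distrib]
      refine Finset.sum_congr rfl fun a _ => ?_
      have hS1 : (∑ b, (2 * (ψh i s a b - ψh j s a b) ^ 1 *
            (Γ * (xtil i s a * X s b) - Γ * (xtil j s a * X s b))))
          = (2 * Γ * (xtil i s a - xtil j s a)) *
            ∑ b, (ψh i s a b - ψh j s a b) * X s b := by
        rw [Finset.mul_sum]
        exact Finset.sum_congr rfl fun b _ => by ring
      have hS2 : (Θ - ψh i s).mulVec (X s) a - (Θ - ψh j s).mulVec (X s) a
          = -∑ b, (ψh i s a b - ψh j s a b) * X s b := by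
        simp only [Matrix.mulVec, dotProduct, Matrix.sub_apply, ← Finset.sum_sub_distrib,
          ← Finset.sum_neg_distrib]
        exact Finset.sum_congr rfl fun b _ => by ring
      rw [hS1]
      have : ((Θ - ψh i s).mulVec (X s) a - k * xtil i s a)
            - ((Θ - ψh j s).mulVec (X s) a - k * xtil j s a)
          = -(∑ b, (ψh i s a b - ψh j s a b) * X s b)
            - k * (xtil i s a - xtil j s a) := by
        rw [← hS2]; ring
      rw [this]
      ring
    have hanti : AntitoneOn F (Set.Ici t₀) := by
      apply antitoneOn_of_deriv_nonpos (convex_Ici t₀)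
      · exact fun s hs => (hFderiv s hs).continuousAt.continuousWithinAt
      · intro s hs
        rw [interior_Ici] at hs
        exact (hFderiv s hs.le).differentiableAt.differentiableWithinAt
      · intro s hs
        rw [interior_Ici] at hs
        rw [(hFderiv s hs.le).deriv]
        apply mul_nonpos_of_nonpos_of_nonneg
        · nlinarith
        · exact Finset.sum_nonneg fun a _ => sq_nonneg _
    have hFt : F t ≤ F t₀ := hanti Set.self_mem_Ici ht ht
    have hzero : (∑ a, (xtil i t₀ a - xtil j t₀ a) ^ 2) = 0 := by
      rw [hinit i j]; simp
    have hsum : (∑ a, ∑ b, (ψh i t a b - ψh j t a b) ^ 2)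
        ≤ ∑ a, ∑ b, (ψh i t₀ a b - ψh j t₀ a b) ^ 2 := by
      have h1 : 0 ≤ Γ * ∑ a, (xtil i t a - xtil j t a) ^ 2 :=
        mul_nonneg hΓ.le (Finset.sum_nonneg fun a _ => sq_nonneg _)
      have := hFt
      rw [hF] at this
      simp only [hzero, mul_zero, add_zero] at this
      linarith
    -- convert sums of squares to Frobenius norms
    rw [Matrix.frobenius_norm_def, Matrix.frobenius_norm_def]
    apply Real.rpow_le_rpow
    · positivity
    · calc (∑ a, ∑ b, ‖(ψh i t - ψh j t) a b‖ ^ (2:ℝ))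
          = ∑ a, ∑ b, (ψh i t a b - ψh j t a b) ^ 2 := by
            refine Finset.sum_congr rfl fun a _ => Finset.sum_congr rfl fun b _ => ?_
            rw [Real.rpow_two, Matrix.sub_apply, Real.norm_eq_abs, sq_abs]
        _ ≤ ∑ a, ∑ b, (ψh i t₀ a b - ψh j t₀ a b) ^ 2 := hsum
        _ = ∑ a, ∑ b, ‖(ψh i t₀ - ψh j t₀) a b‖ ^ (2:ℝ) := by
            refine Finset.sum_congr rfl fun a _ => Finset.sum_congr rfl fun b _ => ?_
            rw [Real.rpow_two, Matrix.sub_apply, Real.norm_eq_abs, sq_abs]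
    · norm_num
  -- conclude on diameters
  rw [convexHull_diam, convexHull_diam]
  apply Metric.diam_le_of_forall_dist_le Metric.diam_nonneg
  rintro x ⟨i, rfl⟩ y ⟨j, rfl⟩
  calc dist (ψh i t) (ψh j t) = ‖ψh i t - ψh j t‖ := dist_eq_norm _ _
    _ ≤ ‖ψh i t₀ - ψh j t₀‖ := key i j
    _ = dist (ψh i t₀) (ψh j t₀) := (dist_eq_norm _ _).symm
    _ ≤ Metric.diam (Set.range fun i => ψh i t₀) :=
        Metric.dist_le_diam_of_mem ((Set.finite_range _).isBounded)
          ⟨i, rfl⟩ ⟨j, rfl⟩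
end

section
/- (Lemma 4: the true state stays in the δ-tube around the nominal trajectory and converges to it.) Suppose x̃ satisfies the coupled adaptive error dynamics with x̃(t₀) = 0 and ‖ψ̃(t₀)‖_F ≤ D, the regressor X is bounded on [t₀, ∞), and x̄ₑ : ℝ → ℝⁿ satisfies x̄ₑ'(t) = −k • x̄ₑ(t) for t ≥ t₀ with x̄ₑ(t₀) = 0. Then the combined error x̃ₙ(t) = x̃(t) + x̄ₑ(t) satisfies ‖x̃ₙ(t)‖ ≤ δ for all t ≥ t₀, where δ = √(1/Γ) · D, and x̃ₙ(t) → 0 as t → ∞. -/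
open Filter Topology

attribute [local instance] Matrix.frobeniusNormedAddCommGroup Matrix.frobeniusNormedSpace

set_option maxHeartbeats 1000000

/-- (Lemma 4: the true state stays in the δ-tube around the nominal
trajectory and converges to it.) Suppose `x̃` satisfies the coupled adaptive error dynamics
with `x̃(t₀) = 0` and `‖ψ̃(t₀)‖_F ≤ D`, the regressor `X` is bounded on `[t₀, ∞)`, and
`x̄ₑ : ℝ → ℝⁿ` satisfies `x̄ₑ'(t) = −k • x̄ₑ(t)` for `t ≥ t₀` with `x̄ₑ(t₀) = 0`. Then the
combined error `x̃ₙ(t) = x̃(t) + x̄ₑ(t)` satisfies `‖x̃ₙ(t)‖ ≤ δ` for all `t ≥ t₀`, where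
`δ = √(1/Γ) · D`, and `x̃ₙ(t) → 0` as `t → ∞`. -/
theorem state_in_tube_and_converges
    (n p : ℕ) (t₀ k Γ D : ℝ) (hk : 0 < k) (hΓ : 0 < Γ) (hD : 0 ≤ D)
    (xtil : ℝ → EuclideanSpace ℝ (Fin n))
    (psitil : ℝ → Matrix (Fin n) (Fin p) ℝ)
    (X : ℝ → EuclideanSpace ℝ (Fin p))
    (hx : ∀ t, t₀ ≤ t →
      HasDerivAt xtil ((show EuclideanSpace ℝ (Fin n) from WithLp.toLp 2 ((psitil t).mulVec (X t))) - k • xtil t) t)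
    (hψ : ∀ t, t₀ ≤ t →
      HasDerivAt psitil (-Γ • Matrix.vecMulVec (xtil t) (X t)) t)
    (C : ℝ) (hX : ∀ t, t₀ ≤ t → ‖X t‖ ≤ C)
    (hx0 : xtil t₀ = 0) (hψ0 : ‖psitil t₀‖ ≤ D)
    (xbare : ℝ → EuclideanSpace ℝ (Fin n))
    (hxbare : ∀ t, t₀ ≤ t → HasDerivAt xbare (-k • xbare t) t)
    (hxbare0 : xbare t₀ = 0) :
    (∀ t, t₀ ≤ t → ‖xtil t + xbare t‖ ≤ Real.sqrt (1/Γ) * D) ∧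
    Tendsto (fun t => xtil t + xbare t) atTop (𝓝 0) := by
  classical
  have hC : 0 ≤ C := le_trans (norm_nonneg _) (hX t₀ le_rfl)
  -- xbare vanishes on [t₀, ∞)
  have hb : ∀ t, t₀ ≤ t → xbare t = 0 := by
    intro t ht
    set e : ℝ → EuclideanSpace ℝ (Fin n) := fun s => Real.exp (k * s) • xbare s with he
    have hed : ∀ s ∈ Set.Ici t₀, HasDerivWithinAt e 0 (Set.Ici t₀) s := by
      intro s hs
      have h1 : HasDerivAt (fun u : ℝ => Real.exp (k * u)) (Real.exp (k * s) * k) s := by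
        simpa [mul_comm, Function.comp_def] using (Real.hasDerivAt_exp (k * s)).comp s
          ((hasDerivAt_id s).const_mul k)
      have h3 := h1.smul (hxbare s hs)
      have h2 : Real.exp (k * s) • (-k • xbare s) + (Real.exp (k * s) * k) • xbare s = 0 := by
        rw [smul_smul]; module
      rw [h2] at h3
      exact h3.hasDerivWithinAt
    have hest := Convex.norm_image_sub_le_of_norm_hasDerivWithin_le (C := 0) hed
      (fun x _ => by simp) (convex_Ici t₀) (Set.self_mem_Ici) ht
    have he0 : e t₀ = 0 := by simp [he, hxbare0]
    have het : e t = 0 := by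
      have h0 : ‖e t - e t₀‖ ≤ 0 := by simpa using hest
      have h0' := norm_le_zero_iff.mp h0
      rwa [he0, sub_zero] at h0'
    have hexp : Real.exp (k * t) ≠ 0 := Real.exp_ne_zero _
    have := congrArg (fun v => (Real.exp (k * t))⁻¹ • v) het
    simpa [he, smul_smul, inv_mul_cancel₀ hexp] using this
  -- scalar quantities
  set g : ℝ → ℝ := fun t => ∑ i, (xtil t i)^2 with hgdef
  set q : ℝ → ℝ := fun t => ∑ a, ∑ b, (psitil t a b)^2 with hqdef
  set V : ℝ → ℝ := fun t => g t + Γ⁻¹ * q t with hVdef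
  set S : ℝ → ℝ := fun t => ∑ i, xtil t i * (psitil t).mulVec (X t) i with hSdef
  have hgnn : ∀ t, 0 ≤ g t := fun t => Finset.sum_nonneg (fun i _ => sq_nonneg _)
  have hqnn : ∀ t, 0 ≤ q t := fun t =>
    Finset.sum_nonneg fun a _ => Finset.sum_nonneg fun b _ => sq_nonneg _
  have hVnn : ∀ t, 0 ≤ V t := fun t =>
    add_nonneg (hgnn t) (mul_nonneg (inv_nonneg.mpr hΓ.le) (hqnn t))
  have hxnorm : ∀ t, ‖xtil t‖ = Real.sqrt (g t) := by
    intro t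
    rw [EuclideanSpace.norm_eq]
    congr 1
    exact Finset.sum_congr rfl fun i _ => by rw [Real.norm_eq_abs, sq_abs]
  -- derivative of g
  have hgd : ∀ t, t₀ ≤ t → HasDerivAt g (2 * S t - 2*k*g t) t := by
    intro t ht
    have hxi : ∀ i, HasDerivAt (fun s => xtil s i)
        ((psitil t).mulVec (X t) i - k * xtil t i) t := by
      intro i
      have := (EuclideanSpace.proj i).hasFDerivAt.comp_hasDerivAt t (hx t ht)
      simpa [Function.comp_def] using this
    have h1 : HasDerivAt g
        (∑ i, (2:ℕ) * xtil t i ^ 1 * ((psitil t).mulVec (X t) i - k * xtil t i)) t :=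
      HasDerivAt.fun_sum (fun i _ => (hxi i).pow 2)
    have h2 : (∑ i, ((2:ℕ):ℝ) * xtil t i ^ 1 * ((psitil t).mulVec (X t) i - k * xtil t i))
        = 2 * S t - 2*k*g t := by
      rw [hSdef, hgdef, Finset.mul_sum, Finset.mul_sum, ← Finset.sum_sub_distrib]
      exact Finset.sum_congr rfl fun i _ => by push_cast; ring
    rwa [h2] at h1
  -- derivative of q
  have hqd : ∀ t, t₀ ≤ t → HasDerivAt q (-(2*Γ) * S t) t := by
    intro t ht
    have hM : ∀ (a : Fin n) (b : Fin p), HasDerivAt (fun s => psitil s a b)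
        (-Γ * (xtil t a * X t b)) t := by
      intro a b
      let L : Matrix (Fin n) (Fin p) ℝ →ₗ[ℝ] ℝ :=
        { toFun := fun M => M a b, map_add' := by intros; rfl, map_smul' := by intros; rfl }
      have := (LinearMap.toContinuousLinearMap L).hasFDerivAt.comp_hasDerivAt t (hψ t ht)
      have h' : (LinearMap.toContinuousLinearMap L) (-Γ • Matrix.vecMulVec (xtil t) (X t))
          = -Γ * (xtil t a * X t b) := by
        show (-Γ • Matrix.vecMulVec (xtil t) (X t)) a b = _
        simp [Matrix.vecMulVec_apply, Matrix.smul_apply, smul_eq_mul, mul_assoc]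
      exact this.congr_deriv h'
    have h1 : HasDerivAt q
        (∑ a, ∑ b, (2:ℕ) * psitil t a b ^ 1 * (-Γ * (xtil t a * X t b))) t :=
      HasDerivAt.fun_sum fun a _ => HasDerivAt.fun_sum fun b _ => (hM a b).pow 2
    have h2 : (∑ a, ∑ b, ((2:ℕ):ℝ) * psitil t a b ^ 1 * (-Γ * (xtil t a * X t b)))
        = -(2*Γ) * S t := by
      rw [hSdef, Finset.mul_sum]
      refine Finset.sum_congr rfl fun a _ => ?_
      rw [Matrix.mulVec, dotProduct, Finset.mul_sum, Finset.mul_sum]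
      exact Finset.sum_congr rfl fun b _ => by push_cast; ring
    rwa [h2] at h1
  -- derivative of V
  have hVd : ∀ t, t₀ ≤ t → HasDerivAt V (-(2*k) * g t) t := by
    intro t ht
    have h1 := (hgd t ht).add ((hqd t ht).const_mul Γ⁻¹)
    have h2 : 2 * S t - 2*k*g t + Γ⁻¹ * (-(2*Γ) * S t) = -(2*k) * g t := by
      field_simp
      ring
    rwa [h2] at h1
  -- V is antitone on Ici t₀
  have hVanti : AntitoneOn V (Set.Ici t₀) := by
    apply antitoneOn_of_deriv_nonpos (convex_Ici t₀)
    · intro x hx'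
      exact ((hVd x hx').continuousAt).continuousWithinAt
    · intro x hx'
      rw [interior_Ici] at hx'
      exact ((hVd x hx'.le).differentiableAt).differentiableWithinAt
    · intro x hx'
      rw [interior_Ici] at hx'
      rw [(hVd x hx'.le).deriv]
      exact mul_nonpos_of_nonpos_of_nonneg (by linarith) (hgnn x)
  have hVle : ∀ t, t₀ ≤ t → V t ≤ V t₀ := fun t ht => hVanti Set.self_mem_Ici ht ht
  -- value of V t₀
  have hg0 : g t₀ = 0 := by
    rw [hgdef]
    simp only [hx0]
    simp
  have hq0 : q t₀ ≤ D^2 := by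
    have hnorm : ‖psitil t₀‖ = Real.sqrt (q t₀) := by
      rw [Matrix.frobenius_norm_def, Real.sqrt_eq_rpow]
      congr 1
      refine Finset.sum_congr rfl fun a _ => Finset.sum_congr rfl fun b _ => ?_
      rw [Real.norm_eq_abs, show (2:ℝ) = ((2:ℕ):ℝ) by norm_num, Real.rpow_natCast, sq_abs]
    calc q t₀ = ‖psitil t₀‖^2 := by rw [hnorm, Real.sq_sqrt (hqnn t₀)]
    _ ≤ D^2 := pow_le_pow_left₀ (norm_nonneg _) hψ0 2
  have hVt0 : V t₀ ≤ Γ⁻¹ * D^2 := by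
    rw [hVdef]
    simp only [hg0, zero_add]
    exact mul_le_mul_of_nonneg_left hq0 (inv_nonneg.mpr hΓ.le)
  set B : ℝ := Γ⁻¹ * D^2 with hBdef
  have hB : 0 ≤ B := mul_nonneg (inv_nonneg.mpr hΓ.le) (sq_nonneg D)
  have hgB : ∀ t, t₀ ≤ t → g t ≤ B := by
    intro t ht
    have : g t ≤ V t := le_add_of_nonneg_right (mul_nonneg (inv_nonneg.mpr hΓ.le) (hqnn t))
    exact this.trans ((hVle t ht).trans hVt0)
  -- tube bound
  have tube : ∀ t, t₀ ≤ t → ‖xtil t + xbare t‖ ≤ Real.sqrt (1/Γ) * D := by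
    intro t ht
    rw [hb t ht, add_zero, hxnorm]
    calc Real.sqrt (g t) ≤ Real.sqrt B := Real.sqrt_le_sqrt (hgB t ht)
    _ = Real.sqrt (1/Γ) * D := by
      rw [hBdef, one_div, Real.sqrt_mul (inv_nonneg.mpr hΓ.le), Real.sqrt_sq hD]
  refine ⟨tube, ?_⟩
  -- bound on q
  have hqB : ∀ t, t₀ ≤ t → q t ≤ Γ * B := by
    intro t ht
    have h1 : Γ⁻¹ * q t ≤ V t := le_add_of_nonneg_left (hgnn t)
    have h2 : Γ⁻¹ * q t ≤ B := h1.trans ((hVle t ht).trans hVt0)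
    calc q t = Γ * (Γ⁻¹ * q t) := by field_simp
    _ ≤ Γ * B := mul_le_mul_of_nonneg_left h2 hΓ.le
  -- bound on S
  have hSb : ∀ t, t₀ ≤ t → |S t| ≤ (B + Γ*B*C^2)/2 := by
    intro t ht
    have hXsq : (∑ b, (X t b)^2) ≤ C^2 := by
      have h1 : Real.sqrt (∑ b, (X t b)^2) ≤ C := by
        have hXn : ‖X t‖ = Real.sqrt (∑ b, (X t b)^2) := by
          rw [EuclideanSpace.norm_eq]
          congr 1
          exact Finset.sum_congr rfl fun b _ => by rw [Real.norm_eq_abs, sq_abs]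
        rw [← hXn]; exact hX t ht
      calc (∑ b, (X t b)^2) = Real.sqrt (∑ b, (X t b)^2) ^ 2 :=
            (Real.sq_sqrt (Finset.sum_nonneg fun b _ => sq_nonneg _)).symm
      _ ≤ C^2 := pow_le_pow_left₀ (Real.sqrt_nonneg _) h1 2
    have hmv : (∑ i, ((psitil t).mulVec (X t) i)^2) ≤ q t * C^2 := by
      have h1 : ∀ i : Fin n, ((psitil t).mulVec (X t) i)^2
          ≤ (∑ b, (psitil t i b)^2) * (∑ b, (X t b)^2) := by
        intro i
        have := Finset.sum_mul_sq_le_sq_mul_sq Finset.univ (fun b => psitil t i b) (fun b => X t b)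
        simpa [Matrix.mulVec, dotProduct] using this
      calc (∑ i, ((psitil t).mulVec (X t) i)^2)
          ≤ ∑ i, (∑ b, (psitil t i b)^2) * (∑ b, (X t b)^2) :=
            Finset.sum_le_sum fun i _ => h1 i
      _ = (∑ i, ∑ b, (psitil t i b)^2) * (∑ b, (X t b)^2) := by rw [Finset.sum_mul]
      _ ≤ q t * C^2 := by
          apply mul_le_mul_of_nonneg_left hXsq
            (Finset.sum_nonneg fun a _ => Finset.sum_nonneg fun b _ => sq_nonneg _)
    have hS2 : (S t)^2 ≤ g t * (∑ i, ((psitil t).mulVec (X t) i)^2) := by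
      have := Finset.sum_mul_sq_le_sq_mul_sq Finset.univ (fun i => xtil t i)
        (fun i => (psitil t).mulVec (X t) i)
      simpa [hSdef, hgdef] using this
    have hS2' : (S t)^2 ≤ B * (Γ*B*C^2) := by
      have hmvnn : 0 ≤ ∑ i, ((psitil t).mulVec (X t) i)^2 :=
        Finset.sum_nonneg fun i _ => sq_nonneg _
      have hqC : (∑ i, ((psitil t).mulVec (X t) i)^2) ≤ Γ*B*C^2 := by
        calc (∑ i, ((psitil t).mulVec (X t) i)^2) ≤ q t * C^2 := hmv
        _ ≤ Γ*B*C^2 := mul_le_mul_of_nonneg_right (hqB t ht) (sq_nonneg C)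
      exact hS2.trans (mul_le_mul (hgB t ht) hqC hmvnn hB)
    have hQnn : 0 ≤ Γ*B*C^2 := mul_nonneg (mul_nonneg hΓ.le hB) (sq_nonneg C)
    have h4 : B * (Γ*B*C^2) ≤ ((B + Γ*B*C^2)/2)^2 := by nlinarith [sq_nonneg (B - Γ*B*C^2)]
    calc |S t| = Real.sqrt ((S t)^2) := (Real.sqrt_sq_eq_abs _).symm
    _ ≤ Real.sqrt (((B + Γ*B*C^2)/2)^2) := Real.sqrt_le_sqrt (hS2'.trans h4)
    _ = (B + Γ*B*C^2)/2 := Real.sqrt_sq (by linarith)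
  -- Lipschitz constant for g
  set M : ℝ := (B + Γ*B*C^2) + 2*k*B + 1 with hMdef
  have hQnn : 0 ≤ Γ*B*C^2 := mul_nonneg (mul_nonneg hΓ.le hB) (sq_nonneg C)
  have hM0 : 0 < M := by nlinarith
  have hg'bound : ∀ t, t₀ ≤ t → |2 * S t - 2*k*g t| ≤ M := by
    intro t ht
    have h1 := hSb t ht
    have h2 := hgB t ht
    have h3 := hgnn t
    rw [abs_le] at h1 ⊢
    constructor <;> nlinarith
  have hglip : ∀ s, t₀ ≤ s → ∀ u, t₀ ≤ u → |g u - g s| ≤ M * |u - s| := by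
    intro s hs u hu
    have := Convex.norm_image_sub_le_of_norm_hasDerivWithin_le
      (f := g) (f' := fun t => 2 * S t - 2*k*g t) (s := Set.Ici t₀)
      (fun x hx' => (hgd x hx').hasDerivWithinAt)
      (fun x hx' => by rw [Real.norm_eq_abs]; exact hg'bound x hx')
      (convex_Ici t₀) hs hu
    simpa [Real.norm_eq_abs] using this
  -- key decay estimate
  have key : ∀ ε > (0:ℝ), ∀ t, t₀ ≤ t → ε ≤ g t →
      k * ε * (ε/(2*M)) ≤ V t - V (t + ε/(2*M)) := by
    intro ε hε t ht hgt
    set h : ℝ := ε/(2*M) with hhdef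
    have hh0 : 0 < h := div_pos hε (by linarith)
    have hMh : M * h ≤ ε/2 := by
      rw [hhdef]
      rw [show M * (ε/(2*M)) = ε/2 by field_simp]
    clear_value h
    have hglow : ∀ s ∈ Set.Icc t (t+h), ε/2 ≤ g s := by
      intro s hs
      have hs0 : t₀ ≤ s := ht.trans hs.1
      have habs : |s - t| ≤ h := by
        rw [abs_le]; constructor
        · linarith [hs.1]
        · linarith [hs.2]
      have hd1 : g t - g s ≤ M * |s - t| := by
        have := abs_le.mp (hglip t ht s hs0)
        linarith [this.1]
      have hd2 : g t - g s ≤ M * h :=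
        hd1.trans (mul_le_mul_of_nonneg_left habs hM0.le)
      linarith [hgt, hd2.trans hMh]
    have hU : AntitoneOn (fun s => V s + (k*ε) * s) (Set.Icc t (t+h)) := by
      apply antitoneOn_of_deriv_nonpos (convex_Icc t (t+h))
      · intro x hx'
        have hx0' : t₀ ≤ x := ht.trans hx'.1
        exact (((hVd x hx0').continuousAt).add
          (continuousAt_const.mul continuousAt_id)).continuousWithinAt
      · intro x hx'
        rw [interior_Icc] at hx'
        have hx0' : t₀ ≤ x := ht.trans hx'.1.le
        exact (((hVd x hx0').differentiableAt).add
          ((differentiable_id.const_mul (k*ε)) x)).differentiableWithinAt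
      · intro x hx'
        rw [interior_Icc] at hx'
        have hx0' : t₀ ≤ x := ht.trans hx'.1.le
        have hd : HasDerivAt (fun s => V s + (k*ε) * s) (-(2*k) * g x + (k*ε) * 1) x :=
          (hVd x hx0').add ((hasDerivAt_id x).const_mul (k*ε))
        rw [hd.deriv]
        have := hglow x ⟨hx'.1.le, hx'.2.le⟩
        nlinarith
    have h1 := hU (Set.left_mem_Icc.mpr (by linarith)) (Set.right_mem_Icc.mpr (by linarith))
      (by linarith)
    simp only at h1
    have hexpand : (k*ε)*(t+h) = (k*ε)*t + (k*ε)*h := by ring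
    linarith
  -- the limit of V
  set W : ℝ → ℝ := fun t => V (max t t₀) with hWdef
  have hWanti : Antitone W := by
    intro s u hsu
    exact hVanti (Set.mem_Ici.mpr (le_max_right s t₀)) (Set.mem_Ici.mpr (le_max_right u t₀))
      (max_le_max hsu le_rfl)
  have hWbdd : BddBelow (Set.range W) := ⟨0, fun y hy => by
    obtain ⟨t, rfl⟩ := hy; exact hVnn _⟩
  have hWlim : Tendsto W atTop (𝓝 (⨅ t, W t)) := tendsto_atTop_ciInf hWanti hWbdd
  set L : ℝ := ⨅ t, W t with hLdef
  have hLle : ∀ t, L ≤ W t := fun t => ciInf_le hWbdd t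
  -- g tends to 0
  have hgto : Tendsto g atTop (𝓝 0) := by
    rw [NormedAddCommGroup.tendsto_nhds_zero]
    intro ε hε
    set h : ℝ := ε/(2*M) with hhdef
    have hh0 : 0 < h := div_pos hε (by linarith)
    have hkh : 0 < k*ε*h := mul_pos (mul_pos hk hε) hh0
    have hev : ∀ᶠ t in atTop, W t < L + k*ε*h :=
      hWlim.eventually_lt_const (by linarith)
    filter_upwards [hev, eventually_ge_atTop t₀] with t hWt ht
    rw [Real.norm_eq_abs, abs_of_nonneg (hgnn t)]
    by_contra hcon
    push_neg at hcon
    have hkey := key ε hε t ht hcon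
    have hWt' : W t = V t := by rw [hWdef]; simp [max_eq_left ht]
    have hWth : W (t+h) = V (t+h) := by
      rw [hWdef]; simp [max_eq_left (show t₀ ≤ t + h by linarith)]
    have hL1 : L ≤ V (t+h) := hWth ▸ hLle (t+h)
    rw [hWt'] at hWt
    rw [← hhdef] at hkey
    linarith
  -- conclude convergence
  rw [tendsto_zero_iff_norm_tendsto_zero]
  have h1 : Tendsto (fun t => Real.sqrt (g t)) atTop (𝓝 0) := by
    have := (Real.continuous_sqrt.tendsto 0).comp hgto
    simpa [Function.comp_def] using this
  apply h1.congr'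
  filter_upwards [eventually_ge_atTop t₀] with t ht
  rw [hb t ht, add_zero, hxnorm]
end
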